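/- arXiv:2004.04857 — 4 statements merged into one kernel-verified Lean document; each statement's English description precedes it below -/
import Mathlib

section
/- Let u ∈ H^{-s}(𝕋, ℝ) with 0 ≤ s < 1/2 and mean zero. Then for every f in the Hardy–Sobolev space H^{1/2}_+, the pairing ⟨u | f·conj(f)⟩ is well defined and satisfies |⟨u | f·conj(f)⟩| ≤ (1/2)‖f‖_{1/2}² + η_s(‖u‖_{-s})·‖f‖_0², where η_s(r) = r·(2(1+r))^α · C², α = (1+2s)/(1-2s), and C > 0 is a constant depending only on s. -/
open scoped BigOperators ComplexConjugate

noncomputable def jap (n : ℤ) : ℝ := max 1 |(n : ℝ)|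

noncomputable def hnormSq (s : ℝ) (v : ℤ → ℂ) : ℝ :=
  ∑' n : ℤ, jap n ^ (2 * s) * ‖v n‖ ^ 2

def memH (s : ℝ) (v : ℤ → ℂ) : Prop :=
  Summable fun n : ℤ => jap n ^ (2 * s) * ‖v n‖ ^ 2

noncomputable def hnorm (s : ℝ) (v : ℤ → ℂ) : ℝ := Real.sqrt (hnormSq s v)

/-- η_s(r) = r (2(1+r))^α C², α = (1+2s)/(1-2s). -/
noncomputable def etaS (s C r : ℝ) : ℝ := r * (2 * (1 + r)) ^ ((1 + 2*s)/(1 - 2*s)) * C ^ 2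

/-!
On the Fourier side, with `a = |f̂|`, duality gives `|⟨u | f f̄⟩| ≤ ‖u‖_{-s} ‖f f̄‖_s`, and the
coefficients of `f f̄` are bounded by the correlation `Σ_j a_j a_{j+n}`. For the paraproduct
estimate `‖f f̄‖_s ≤ K ‖f‖_σ²`, `σ = (1/2 + s)/2`, take `n ≥ 0` and split the correlation, which
runs over `j ≥ 0` because `f̂` vanishes at negative frequencies, at `j = n`: for `j ≤ n` the
weight `⟨j+n⟩` is comparable to `⟨n⟩`, for `j > n` to `⟨j⟩`. Cauchy–Schwarz with weights
`⟨·⟩^{±σ}` reduces each part to a kernel controlled by the partial sums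
`Σ_{0 ≤ j ≤ n} ⟨j⟩^t ≲ ⟨n⟩^{1+t}`, `-1 < t ≤ 0`. Hölder interpolation
`‖f‖_σ² ≤ ‖f‖_{1/2}^{1+2s} ‖f‖_0^{1-2s}` and the weighted AM–GM inequality then split
`‖u‖_{-s} ‖f‖_{1/2}^{1+2s} ‖f‖_0^{1-2s}` into `½ ‖f‖_{1/2}² + η_s(‖u‖_{-s}) ‖f‖_0²`.

All series are summed in `ℝ≥0∞`, so summability only has to be checked at the very end.
-/

open scoped ENNReal

namespace HardySobolev

lemma one_le_jap (n : ℤ) : 1 ≤ jap n := le_max_left _ _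

lemma jap_pos (n : ℤ) : 0 < jap n := one_pos.trans_le (one_le_jap n)

lemma jap_neg (n : ℤ) : jap (-n) = jap n := by simp [jap]

lemma jap_le_jap_of_abs_le {m n : ℤ} (h : |m| ≤ |n|) : jap m ≤ jap n :=
  max_le_max le_rfl (by exact_mod_cast h)

lemma jap_of_one_le {n : ℤ} (hn : 1 ≤ n) : jap n = n := by
  have hn' : (1 : ℝ) ≤ n := by exact_mod_cast hn
  rw [jap, abs_of_pos (by linarith), max_eq_right hn']

lemma jap_le_two_mul_jap_sub {k n : ℤ} (hn : 0 ≤ n) (hk : n < k - n) :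
    jap k ≤ 2 * jap (k - n) := by
  rw [jap_of_one_le (by omega), jap_of_one_le (by omega)]
  exact_mod_cast (by omega : k ≤ 2 * (k - n))

noncomputable def japE (n : ℤ) : ℝ≥0∞ := ENNReal.ofReal (jap n)

lemma japE_rpow (n : ℤ) (t : ℝ) : japE n ^ t = ENNReal.ofReal (jap n ^ t) :=
  ENNReal.ofReal_rpow_of_pos (jap_pos n)

lemma japE_ne_zero (n : ℤ) : japE n ≠ 0 := by simp [japE, jap_pos n]

lemma japE_ne_top (n : ℤ) : japE n ≠ ∞ := ENNReal.ofReal_ne_top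

lemma japE_neg (n : ℤ) : japE (-n) = japE n := by rw [japE, japE, jap_neg]

lemma japE_rpow_add (n : ℤ) (s t : ℝ) : japE n ^ (s + t) = japE n ^ s * japE n ^ t :=
  ENNReal.rpow_add s t (japE_ne_zero n) (japE_ne_top n)

lemma japE_rpow_neg_mul_rpow (n : ℤ) (t : ℝ) : japE n ^ (-t) * japE n ^ t = 1 := by
  rw [← japE_rpow_add, neg_add_cancel, ENNReal.rpow_zero]

lemma sq_japE_rpow (n : ℤ) (t : ℝ) : (japE n ^ t) ^ 2 = japE n ^ (2 * t) := by
  rw [mul_comm, ← ENNReal.rpow_mul_natCast]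
  norm_num

lemma japE_rpow_le_of_abs_le {m n : ℤ} (h : |m| ≤ |n|) {t : ℝ} (ht : t ≤ 0) :
    japE n ^ t ≤ japE m ^ t := by
  rw [japE_rpow, japE_rpow]
  exact ENNReal.ofReal_le_ofReal
    (Real.rpow_le_rpow_of_nonpos (jap_pos m) (jap_le_jap_of_abs_le h) ht)

lemma japE_sub_rpow_neg_le {k n : ℤ} (hn : 0 ≤ n) (hk : n < k - n) {t : ℝ} (ht : 0 ≤ t) :
    japE (k - n) ^ (-t) ≤ ENNReal.ofReal (2 ^ t) * japE k ^ (-t) := by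
  rw [japE_rpow, japE_rpow, ← ENNReal.ofReal_mul (by positivity)]
  refine ENNReal.ofReal_le_ofReal ?_
  calc jap (k - n) ^ (-t) ≤ (jap k / 2) ^ (-t) :=
        Real.rpow_le_rpow_of_nonpos (half_pos (jap_pos k))
          (by linarith [jap_le_two_mul_jap_sub hn hk]) (neg_nonpos.2 ht)
    _ = 2 ^ t * jap k ^ (-t) := by
        rw [Real.div_rpow (jap_pos k).le zero_le_two, Real.rpow_neg zero_le_two, div_inv_eq_mul,
          mul_comm]

lemma mul_eq_japE_rpow_neg_mul (m k : ℤ) (t : ℝ) (x y : ℝ≥0∞) :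
    x * y = (japE m ^ (-t) * japE k ^ (-t)) * ((japE m ^ t * x) * (japE k ^ t * y)) := by
  calc x * y = (japE m ^ (-t) * japE m ^ t) * (japE k ^ (-t) * japE k ^ t) * (x * y) := by
        rw [japE_rpow_neg_mul_rpow, japE_rpow_neg_mul_rpow, one_mul, one_mul]
    _ = _ := by ring

lemma sum_range_add_one_rpow_le {t : ℝ} (ht : -1 < t) (ht0 : t ≤ 0) (N : ℕ) :
    ∑ j ∈ Finset.range N, ((j : ℝ) + 1) ^ t ≤ (N : ℝ) ^ (t + 1) / (t + 1) := by
  have hp : 0 < t + 1 := by linarith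
  cases N with
  | zero => simp [Real.zero_rpow hp.ne']
  | succ N =>
    have hanti : AntitoneOn (fun x : ℝ => x ^ t) (Set.Icc 1 (1 + N)) := fun x hx y _ hxy =>
      Real.rpow_le_rpow_of_nonpos (one_pos.trans_le hx.1) hxy ht0
    have hint := hanti.sum_le_integral
    rw [integral_rpow (Or.inl ht), Real.one_rpow, sub_div] at hint
    have hinv : 1 ≤ 1 / (t + 1) := by rw [le_div_iff₀ hp]; linarith
    rw [Finset.sum_range_succ']
    push_cast at hint ⊢
    calc ∑ i ∈ Finset.range N, ((i : ℝ) + 1 + 1) ^ t + (0 + 1) ^ t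
        ≤ ((1 + N) ^ (t + 1) / (t + 1) - 1 / (t + 1)) + 1 := by
          rw [zero_add, Real.one_rpow]
          gcongr
          refine le_of_eq_of_le (Finset.sum_congr rfl fun i _ => ?_) hint
          congr 1
          ring
      _ ≤ (N + 1) ^ (t + 1) / (t + 1) := by rw [add_comm (1 : ℝ) N]; linarith

lemma tsum_ite_natCast_le_eq_sum_range (g : ℤ → ℝ≥0∞) (N : ℕ) :
    ∑' j : ℤ, (if 0 ≤ j ∧ j ≤ N then g j else 0) = ∑ j ∈ Finset.range (N + 1), g j := by
  have hsupp : ∀ j ∉ (Finset.range (N + 1)).map Nat.castEmbedding,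
      (if 0 ≤ j ∧ j ≤ (N : ℤ) then g j else 0) = 0 := by
    intro j hj
    refine if_neg fun ⟨h0, hjN⟩ => hj ?_
    lift j to ℕ using h0
    exact Finset.mem_map_of_mem _ (Finset.mem_range.2 (by omega))
  rw [tsum_eq_sum hsupp, Finset.sum_map]
  refine Finset.sum_congr rfl fun j hj => if_pos ⟨by simp, ?_⟩
  simpa [Nat.lt_succ_iff] using hj

lemma tsum_ite_japE_rpow_le {t : ℝ} (ht : -1 < t) (ht0 : t ≤ 0) {n : ℤ} (hn : 0 ≤ n) :
    ∑' j : ℤ, (if 0 ≤ j ∧ j ≤ n then japE j ^ t else 0)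
      ≤ ENNReal.ofReal (1 + 1 / (t + 1)) * japE n ^ (t + 1) := by
  have hp : 0 < t + 1 := by linarith
  lift n to ℕ using hn
  have hsum : ∑ j ∈ Finset.range (n + 1), japE j ^ t
      = ENNReal.ofReal (∑ j ∈ Finset.range n, ((j : ℝ) + 1) ^ t + 1) := by
    rw [Finset.sum_range_succ', ENNReal.ofReal_add (Finset.sum_nonneg fun j _ => by positivity)
      zero_le_one, ENNReal.ofReal_sum_of_nonneg fun j _ => by positivity]
    simp only [japE_rpow]
    congr 1
    · refine Finset.sum_congr rfl fun j _ => ?_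
      rw [jap_of_one_le (by omega)]
      push_cast
      rfl
    · simp [jap]
  have hjn : (n : ℝ) ≤ jap n := le_trans (by simp) (le_max_right _ _)
  rw [tsum_ite_natCast_le_eq_sum_range, hsum, japE_rpow, ← ENNReal.ofReal_mul (by positivity)]
  refine ENNReal.ofReal_le_ofReal ?_
  have h1 : 1 ≤ jap n ^ (t + 1) := Real.one_le_rpow (one_le_jap n) hp.le
  have h2 : (n : ℝ) ^ (t + 1) ≤ jap n ^ (t + 1) := by gcongr
  calc ∑ j ∈ Finset.range n, ((j : ℝ) + 1) ^ t + 1 ≤ (n : ℝ) ^ (t + 1) / (t + 1) + 1 :=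
        add_le_add_left (sum_range_add_one_rpow_le ht ht0 n) 1
    _ ≤ jap n ^ (t + 1) / (t + 1) + jap n ^ (t + 1) := by gcongr
    _ = _ := by ring

lemma _root_.ENNReal.inner_le_Lp_mul_Lq_tsum {ι : Type*} {p q : ℝ} (hpq : p.HolderConjugate q)
    (x y : ι → ℝ≥0∞) :
    ∑' i, x i * y i ≤ (∑' i, x i ^ p) ^ (1 / p) * (∑' i, y i ^ q) ^ (1 / q) := by
  let _ : MeasurableSpace ι := ⊤
  have : MeasurableSingletonClass ι := ⟨fun _ => trivial⟩
  simpa [MeasureTheory.lintegral_count] using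
    ENNReal.lintegral_mul_le_Lp_mul_Lq MeasureTheory.Measure.count hpq
      (measurable_from_top (f := x)).aemeasurable (measurable_from_top (f := y)).aemeasurable

lemma _root_.ENNReal.sq_tsum_mul_le {ι : Type*} (x y : ι → ℝ≥0∞) :
    (∑' i, x i * y i) ^ 2 ≤ (∑' i, x i ^ 2) * ∑' i, y i ^ 2 := by
  have h := ENNReal.inner_le_Lp_mul_Lq_tsum Real.HolderConjugate.two_two x y
  simp only [ENNReal.rpow_two] at h
  calc (∑' i, x i * y i) ^ 2
      ≤ ((∑' i, x i ^ 2) ^ (1 / (2 : ℝ)) * (∑' i, y i ^ 2) ^ (1 / (2 : ℝ))) ^ 2 := by gcongr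
    _ = (∑' i, x i ^ 2) * ∑' i, y i ^ 2 := by
        rw [mul_pow, ← ENNReal.rpow_mul_natCast, ← ENNReal.rpow_mul_natCast]
        norm_num

lemma _root_.ENNReal.add_sq_le_two_mul (x y : ℝ≥0∞) : (x + y) ^ 2 ≤ 2 * (x ^ 2 + y ^ 2) := by
  have h := ENNReal.rpow_add_le_mul_rpow_add_rpow x y (p := 2) one_le_two
  norm_num [ENNReal.rpow_two] at h
  exact h

noncomputable def weightedSq (t : ℝ) (a : ℤ → ℝ≥0∞) (n : ℤ) : ℝ≥0∞ := japE n ^ (2 * t) * a n ^ 2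

/-- The `ℝ≥0∞` counterpart of `hnormSq`, applied to moduli of Fourier coefficients. -/
noncomputable def sobE (t : ℝ) (a : ℤ → ℝ≥0∞) : ℝ≥0∞ := ∑' n, weightedSq t a n

noncomputable def corr (a : ℤ → ℝ≥0∞) (n : ℤ) : ℝ≥0∞ := ∑' j, a j * a (j + n)

lemma corr_neg (a : ℤ → ℝ≥0∞) (n : ℤ) : corr a (-n) = corr a n := by
  rw [corr, ← (Equiv.addRight n).tsum_eq]
  refine tsum_congr fun j => ?_
  simp [mul_comm]

lemma tsum_corr (a : ℤ → ℝ≥0∞) : ∑' n, corr a n = (∑' j, a j) ^ 2 := by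
  simp only [corr]
  rw [ENNReal.tsum_comm, sq, ← ENNReal.tsum_mul_right]
  refine tsum_congr fun j => ?_
  rw [ENNReal.tsum_mul_left]
  congr 1
  exact (Equiv.addLeft j).tsum_eq a

lemma corr_le_sobE_zero (a : ℤ → ℝ≥0∞) (n : ℤ) : corr a n ≤ sobE 0 a := by
  have h := ENNReal.sq_tsum_mul_le a (fun j => a (j + n))
  have hshift : ∑' j, a (j + n) ^ 2 = ∑' j, a j ^ 2 := (Equiv.addRight n).tsum_eq (a · ^ 2)
  rw [hshift, ← sq, ENNReal.pow_le_pow_left_iff two_ne_zero] at h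
  simpa [corr, sobE, weightedSq] using h

lemma sq_tsum_mul_le_sobE (b c : ℤ → ℝ≥0∞) (t : ℝ) :
    (∑' n, b n * c n) ^ 2 ≤ sobE (-t) b * sobE t c := by
  calc (∑' n, b n * c n) ^ 2 = (∑' n, (japE n ^ (-t) * b n) * (japE n ^ t * c n)) ^ 2 := by
        congr 1
        refine tsum_congr fun n => ?_
        rw [mul_mul_mul_comm, japE_rpow_neg_mul_rpow, one_mul]
    _ ≤ _ := ENNReal.sq_tsum_mul_le _ _
    _ = sobE (-t) b * sobE t c := by simp only [sobE, weightedSq, mul_pow, sq_japE_rpow]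

lemma sobE_le_rpow_mul_rpow {θ : ℝ} (hθ0 : 0 < θ) (hθ1 : θ < 1) (s₀ s₁ : ℝ)
    (a : ℤ → ℝ≥0∞) :
    sobE (θ * s₁ + (1 - θ) * s₀) a ≤ sobE s₁ a ^ θ * sobE s₀ a ^ (1 - θ) := by
  have hθ' : 0 < 1 - θ := by linarith
  have hpq : θ⁻¹.HolderConjugate (1 - θ)⁻¹ := .inv_inv hθ0 hθ' (by ring)
  have hsplit : ∀ n, weightedSq (θ * s₁ + (1 - θ) * s₀) a n
      = weightedSq s₁ a n ^ θ * weightedSq s₀ a n ^ (1 - θ) := by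
    intro n
    simp only [weightedSq]
    rw [ENNReal.mul_rpow_of_nonneg _ _ hθ0.le, ENNReal.mul_rpow_of_nonneg _ _ hθ'.le,
      ← ENNReal.rpow_mul, ← ENNReal.rpow_mul, mul_mul_mul_comm, ← japE_rpow_add,
      ← ENNReal.rpow_add_of_nonneg _ _ hθ0.le hθ'.le, add_sub_cancel, ENNReal.rpow_one]
    ring_nf
  have h := ENNReal.inner_le_Lp_mul_Lq_tsum hpq (fun n => weightedSq s₁ a n ^ θ)
    (fun n => weightedSq s₀ a n ^ (1 - θ))
  simp only [ENNReal.rpow_rpow_inv hθ0.ne', ENNReal.rpow_rpow_inv hθ'.ne', one_div,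
    inv_inv] at h
  simpa only [sobE, hsplit] using h

noncomputable def corrLow (a : ℤ → ℝ≥0∞) (n : ℤ) : ℝ≥0∞ :=
  ∑' j, if 0 ≤ j ∧ j ≤ n then a j * a (j + n) else 0

noncomputable def corrHigh (a : ℤ → ℝ≥0∞) (n : ℤ) : ℝ≥0∞ :=
  ∑' j, if n < j then a j * a (j + n) else 0

/-- The reindexed second Cauchy–Schwarz factor of `corrHigh a n`, weighted by `⟨n⟩^{2σ-1}`. -/
noncomputable def corrHighMajorant (σ : ℝ) (a : ℤ → ℝ≥0∞) (n : ℤ) : ℝ≥0∞ :=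
  ∑' k, if 0 ≤ n ∧ n < k - n then
    japE n ^ (2 * σ - 1) * japE (k - n) ^ (-(2 * σ)) * weightedSq σ a k else 0

noncomputable def paraproductConst (σ : ℝ) : ℝ :=
  4 * (1 + 1 / (1 - 2 * σ) + 2 ^ (2 * σ) * (1 + 1 / (2 * σ)))

section Paraproduct

variable {σ : ℝ} (a : ℤ → ℝ≥0∞)

lemma corr_eq_corrLow_add_corrHigh (ha : ∀ j < 0, a j = 0) (n : ℤ) :
    corr a n = corrLow a n + corrHigh a n := by
  rw [corr, corrLow, corrHigh, ← ENNReal.tsum_add]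
  refine tsum_congr fun j => ?_
  rcases lt_or_ge j 0 with hj | hj
  · simp [ha j hj]
  · rcases le_or_gt j n with hjn | hjn
    · simp [hj, hjn, not_lt.2 hjn]
    · simp [hjn, not_le.2 hjn]

lemma sq_corrLow_le (n : ℤ) :
    corrLow a n ^ 2 ≤ (∑' j, if 0 ≤ j ∧ j ≤ n then
      japE j ^ (-(2 * σ)) * japE (j + n) ^ (-(2 * σ)) else 0) * corr (weightedSq σ a) n := by
  have hfactor : ∀ j, (if 0 ≤ j ∧ j ≤ n then a j * a (j + n) else 0)
      = (if 0 ≤ j ∧ j ≤ n then japE j ^ (-σ) * japE (j + n) ^ (-σ) else 0)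
        * ((japE j ^ σ * a j) * (japE (j + n) ^ σ * a (j + n))) := by
    intro j
    split_ifs
    · exact mul_eq_japE_rpow_neg_mul j (j + n) σ _ _
    · rw [zero_mul]
  rw [corrLow, tsum_congr hfactor]
  refine (ENNReal.sq_tsum_mul_le _ _).trans (le_of_eq ?_)
  simp only [corr, weightedSq, ite_pow, mul_pow, sq_japE_rpow, mul_neg]
  simp

lemma tsum_low_kernel_le (hσ0 : 0 ≤ σ) (hσ1 : σ < 1 / 2) {n : ℤ} (hn : 0 ≤ n) :
    ∑' j, (if 0 ≤ j ∧ j ≤ n then japE j ^ (-(2 * σ)) * japE (j + n) ^ (-(2 * σ)) else 0)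
      ≤ ENNReal.ofReal (1 + 1 / (1 - 2 * σ)) * japE n ^ (1 - 4 * σ) := by
  calc _ ≤ ∑' j, japE n ^ (-(2 * σ)) * (if 0 ≤ j ∧ j ≤ n then japE j ^ (-(2 * σ)) else 0) := by
        refine ENNReal.tsum_le_tsum fun j => ?_
        split_ifs with hj
        · rw [mul_comm]
          gcongr ?_ * _
          exact japE_rpow_le_of_abs_le (abs_le_abs_of_nonneg hn (by omega)) (by linarith)
        · simp
    _ = japE n ^ (-(2 * σ)) * ∑' j, (if 0 ≤ j ∧ j ≤ n then japE j ^ (-(2 * σ)) else 0) :=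
        ENNReal.tsum_mul_left
    _ ≤ japE n ^ (-(2 * σ)) * (ENNReal.ofReal (1 + 1 / (1 - 2 * σ)) * japE n ^ (1 - 2 * σ)) := by
        have h := tsum_ite_japE_rpow_le (t := -(2 * σ)) (by linarith) (by linarith) hn
        rw [show -(2 * σ) + 1 = 1 - 2 * σ by ring] at h
        gcongr
    _ = _ := by
        rw [show 1 - 4 * σ = -(2 * σ) + (1 - 2 * σ) by ring, japE_rpow_add]
        ring

lemma japE_rpow_mul_sq_corrLow_le (hσ0 : 0 ≤ σ) (hσ1 : σ < 1 / 2) {n : ℤ} (hn : 0 ≤ n) :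
    japE n ^ (4 * σ - 1) * corrLow a n ^ 2
      ≤ ENNReal.ofReal (1 + 1 / (1 - 2 * σ)) * corr (weightedSq σ a) n := by
  calc japE n ^ (4 * σ - 1) * corrLow a n ^ 2
      ≤ japE n ^ (4 * σ - 1) * ((ENNReal.ofReal (1 + 1 / (1 - 2 * σ)) * japE n ^ (1 - 4 * σ))
          * corr (weightedSq σ a) n) := by
        gcongr
        exact (sq_corrLow_le a n).trans (by gcongr; exact tsum_low_kernel_le hσ0 hσ1 hn)
    _ = (japE n ^ (4 * σ - 1) * japE n ^ (1 - 4 * σ))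
          * (ENNReal.ofReal (1 + 1 / (1 - 2 * σ)) * corr (weightedSq σ a) n) := by ring
    _ = _ := by rw [← japE_rpow_add, sub_add_sub_cancel', sub_self, ENNReal.rpow_zero, one_mul]

lemma sq_corrHigh_le (n : ℤ) :
    corrHigh a n ^ 2 ≤ (∑' j, if n < j then japE (j + n) ^ (-(2 * σ)) * weightedSq σ a j else 0)
      * ∑' k, if n < k - n then japE (k - n) ^ (-(2 * σ)) * weightedSq σ a k else 0 := by
  have hfactor : ∀ j, (if n < j then a j * a (j + n) else 0)
      = (if n < j then japE (j + n) ^ (-σ) * (japE j ^ σ * a j) else 0)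
        * (if n < j then japE j ^ (-σ) * (japE (j + n) ^ σ * a (j + n)) else 0) := by
    intro j
    split_ifs
    · rw [mul_eq_japE_rpow_neg_mul j (j + n) σ]
      ring
    · rw [zero_mul]
  have hshift : ∑' j, (if n < j then japE j ^ (-σ) * (japE (j + n) ^ σ * a (j + n)) else 0) ^ 2
      = ∑' k, if n < k - n then japE (k - n) ^ (-(2 * σ)) * weightedSq σ a k else 0 := by
    rw [← (Equiv.subRight n).tsum_eq]
    refine tsum_congr fun k => ?_
    simp only [Equiv.subRight_apply, sub_add_cancel, ite_pow, weightedSq, mul_pow, sq_japE_rpow,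
      mul_neg]
    simp
  rw [corrHigh, tsum_congr hfactor, ← hshift]
  refine (ENNReal.sq_tsum_mul_le _ _).trans (le_of_eq ?_)
  simp only [weightedSq, ite_pow, mul_pow, sq_japE_rpow, mul_neg]
  simp

lemma japE_rpow_mul_sq_corrHigh_le (hσ0 : 0 ≤ σ) {n : ℤ} (hn : 0 ≤ n) :
    japE n ^ (4 * σ - 1) * corrHigh a n ^ 2 ≤ sobE σ a * corrHighMajorant σ a n := by
  have hfirst : ∑' j, (if n < j then japE (j + n) ^ (-(2 * σ)) * weightedSq σ a j else 0)
      ≤ japE n ^ (-(2 * σ)) * sobE σ a := by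
    rw [sobE, ← ENNReal.tsum_mul_left]
    refine ENNReal.tsum_le_tsum fun j => ?_
    split_ifs with hj
    · gcongr ?_ * _
      exact japE_rpow_le_of_abs_le (abs_le_abs_of_nonneg hn (by omega)) (by linarith)
    · simp
  have hsecond : japE n ^ (2 * σ - 1)
        * ∑' k, (if n < k - n then japE (k - n) ^ (-(2 * σ)) * weightedSq σ a k else 0)
      = corrHighMajorant σ a n := by
    rw [corrHighMajorant, ← ENNReal.tsum_mul_left]
    refine tsum_congr fun k => ?_
    simp only [hn, true_and, mul_ite, mul_zero, mul_assoc]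
  calc japE n ^ (4 * σ - 1) * corrHigh a n ^ 2
      ≤ japE n ^ (4 * σ - 1) * ((japE n ^ (-(2 * σ)) * sobE σ a) * ∑' k,
          (if n < k - n then japE (k - n) ^ (-(2 * σ)) * weightedSq σ a k else 0)) := by
        gcongr
        exact (sq_corrHigh_le a n).trans (by gcongr)
    _ = sobE σ a * (japE n ^ (4 * σ - 1 + -(2 * σ)) * ∑' k,
          (if n < k - n then japE (k - n) ^ (-(2 * σ)) * weightedSq σ a k else 0)) := by
        rw [japE_rpow_add]
        ring
    _ = sobE σ a * corrHighMajorant σ a n := by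
        rw [← hsecond, show 4 * σ - 1 + -(2 * σ) = 2 * σ - 1 by ring]

lemma tsum_high_kernel_le (hσ0 : 0 < σ) (hσ1 : σ < 1 / 2) (k : ℤ) :
    ∑' n, (if 0 ≤ n ∧ n < k - n then japE n ^ (2 * σ - 1) * japE (k - n) ^ (-(2 * σ)) else 0)
      ≤ ENNReal.ofReal (2 ^ (2 * σ) * (1 + 1 / (2 * σ))) := by
  rcases lt_or_ge k 1 with hk | hk
  · simp [show ∀ n : ℤ, ¬(0 ≤ n ∧ n < k - n) by omega]
  calc _ ≤ ∑' n, (if 0 ≤ n ∧ n ≤ k then japE n ^ (2 * σ - 1) else 0)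
          * (ENNReal.ofReal (2 ^ (2 * σ)) * japE k ^ (-(2 * σ))) := by
        refine ENNReal.tsum_le_tsum fun n => ?_
        split_ifs with h₁ h₂ h₂
        · gcongr
          exact japE_sub_rpow_neg_le h₁.1 h₁.2 (by linarith)
        · omega
        · simp
        · simp
    _ = (∑' n, if 0 ≤ n ∧ n ≤ k then japE n ^ (2 * σ - 1) else 0)
          * (ENNReal.ofReal (2 ^ (2 * σ)) * japE k ^ (-(2 * σ))) := ENNReal.tsum_mul_right
    _ ≤ (ENNReal.ofReal (1 + 1 / (2 * σ)) * japE k ^ (2 * σ))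
          * (ENNReal.ofReal (2 ^ (2 * σ)) * japE k ^ (-(2 * σ))) := by
        have h := tsum_ite_japE_rpow_le (t := 2 * σ - 1) (by linarith) (by linarith)
          (n := k) (by omega)
        rw [sub_add_cancel] at h
        gcongr
    _ = ENNReal.ofReal (2 ^ (2 * σ)) * ENNReal.ofReal (1 + 1 / (2 * σ))
          * (japE k ^ (-(2 * σ)) * japE k ^ (2 * σ)) := by ring
    _ = _ := by rw [japE_rpow_neg_mul_rpow, mul_one, ENNReal.ofReal_mul (by positivity)]

lemma tsum_corrHighMajorant_le (hσ0 : 0 < σ) (hσ1 : σ < 1 / 2) :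
    ∑' n, corrHighMajorant σ a n
      ≤ ENNReal.ofReal (2 ^ (2 * σ) * (1 + 1 / (2 * σ))) * sobE σ a := by
  rw [sobE, ← ENNReal.tsum_mul_left]
  simp only [corrHighMajorant]
  rw [ENNReal.tsum_comm]
  refine ENNReal.tsum_le_tsum fun k => ?_
  calc _ = (∑' n, if 0 ≤ n ∧ n < k - n then
              japE n ^ (2 * σ - 1) * japE (k - n) ^ (-(2 * σ)) else 0) * weightedSq σ a k := by
        rw [← ENNReal.tsum_mul_right]
        exact tsum_congr fun n => by split_ifs <;> simp
    _ ≤ _ := by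
        gcongr
        exact tsum_high_kernel_le hσ0 hσ1 k

lemma weightedSq_corr_le (hσ0 : 0 ≤ σ) (hσ1 : σ < 1 / 2) (ha : ∀ j < 0, a j = 0) {n : ℤ}
    (hn : 0 ≤ n) :
    weightedSq (2 * σ - 1 / 2) (corr a) n
      ≤ 2 * (ENNReal.ofReal (1 + 1 / (1 - 2 * σ)) * corr (weightedSq σ a) n
        + sobE σ a * corrHighMajorant σ a n) := by
  calc weightedSq (2 * σ - 1 / 2) (corr a) n
      = japE n ^ (4 * σ - 1) * (corrLow a n + corrHigh a n) ^ 2 := by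
        rw [weightedSq, corr_eq_corrLow_add_corrHigh a ha]
        ring_nf
    _ ≤ japE n ^ (4 * σ - 1) * (2 * (corrLow a n ^ 2 + corrHigh a n ^ 2)) := by
        gcongr
        exact ENNReal.add_sq_le_two_mul _ _
    _ = 2 * (japE n ^ (4 * σ - 1) * corrLow a n ^ 2
          + japE n ^ (4 * σ - 1) * corrHigh a n ^ 2) := by ring
    _ ≤ _ := by
        gcongr 2 * (?_ + ?_)
        · exact japE_rpow_mul_sq_corrLow_le a hσ0 hσ1 hn
        · exact japE_rpow_mul_sq_corrHigh_le a hσ0 hn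

lemma paraproductConst_pos (hσ0 : 0 < σ) (hσ1 : σ < 1 / 2) : 0 < paraproductConst σ := by
  have : 0 < 1 - 2 * σ := by linarith
  rw [paraproductConst]
  positivity

theorem sobE_corr_le (hσ0 : 0 < σ) (hσ1 : σ < 1 / 2) (ha : ∀ j < 0, a j = 0) :
    sobE (2 * σ - 1 / 2) (corr a) ≤ ENNReal.ofReal (paraproductConst σ) * sobE σ a ^ 2 := by
  set c₁ := ENNReal.ofReal (1 + 1 / (1 - 2 * σ))
  set c₂ := ENNReal.ofReal (2 ^ (2 * σ) * (1 + 1 / (2 * σ)))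
  set b : ℤ → ℝ≥0∞ := fun n =>
    2 * (c₁ * corr (weightedSq σ a) n + sobE σ a * corrHighMajorant σ a n)
  have hb : ∀ n, weightedSq (2 * σ - 1 / 2) (corr a) n ≤ b n + b (-n) := by
    intro n
    rcases le_total 0 n with hn | hn
    · exact (weightedSq_corr_le a hσ0.le hσ1 ha hn).trans le_self_add
    · have h := weightedSq_corr_le a hσ0.le hσ1 ha (neg_nonneg.2 hn)
      rw [weightedSq, japE_neg, corr_neg, ← weightedSq] at h
      exact h.trans le_add_self
  have hsum_b : ∑' n, b n ≤ 2 * (c₁ + c₂) * sobE σ a ^ 2 := by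
    calc ∑' n, b n = 2 * (c₁ * ∑' n, corr (weightedSq σ a) n
          + sobE σ a * ∑' n, corrHighMajorant σ a n) := by
          simp only [b, ENNReal.tsum_mul_left, ENNReal.tsum_add]
      _ ≤ 2 * (c₁ * sobE σ a ^ 2 + sobE σ a * (c₂ * sobE σ a)) := by
          rw [tsum_corr, ← sobE]
          gcongr
          exact tsum_corrHighMajorant_le a hσ0 hσ1
      _ = 2 * (c₁ + c₂) * sobE σ a ^ 2 := by ring
  have hconst : ENNReal.ofReal (paraproductConst σ) = 4 * (c₁ + c₂) := by
    have : 0 < 1 - 2 * σ := by linarith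
    rw [paraproductConst, ENNReal.ofReal_mul zero_le_four, ENNReal.ofReal_add (by positivity)
      (by positivity), ENNReal.ofReal_ofNat]
  calc sobE (2 * σ - 1 / 2) (corr a) ≤ ∑' n, (b n + b (-n)) := ENNReal.tsum_le_tsum hb
    _ = 2 * ∑' n, b n := by
        rw [ENNReal.tsum_add, two_mul]
        congr 1
        exact (Equiv.neg ℤ).tsum_eq b
    _ ≤ 2 * (2 * (c₁ + c₂) * sobE σ a ^ 2) := by gcongr
    _ = ENNReal.ofReal (paraproductConst σ) * sobE σ a ^ 2 := by rw [hconst]; ring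

end Paraproduct

lemma hnorm_nonneg (t : ℝ) (v : ℤ → ℂ) : 0 ≤ hnorm t v := Real.sqrt_nonneg _

lemma jap_rpow_mul_sq_nonneg (t : ℝ) (z : ℂ) (n : ℤ) : 0 ≤ jap n ^ (2 * t) * ‖z‖ ^ 2 :=
  mul_nonneg (Real.rpow_nonneg (jap_pos n).le _) (sq_nonneg _)

lemma memH_mono {s t : ℝ} (hst : s ≤ t) {v : ℤ → ℂ} (hv : memH t v) : memH s v :=
  hv.of_nonneg_of_le (fun n => jap_rpow_mul_sq_nonneg s (v n) n) fun n =>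
    mul_le_mul_of_nonneg_right
      (Real.rpow_le_rpow_of_exponent_le (one_le_jap n) (by linarith)) (sq_nonneg _)

lemma ofReal_hnorm_sq {t : ℝ} {v : ℤ → ℂ} (hv : memH t v) :
    ENNReal.ofReal (hnorm t v ^ 2) = sobE t (fun n => ‖v n‖ₑ) := by
  rw [hnorm, hnormSq, Real.sq_sqrt (tsum_nonneg fun n => jap_rpow_mul_sq_nonneg t (v n) n),
    ENNReal.ofReal_tsum_of_nonneg (fun n => jap_rpow_mul_sq_nonneg t (v n) n) hv]
  refine tsum_congr fun n => ?_
  rw [ENNReal.ofReal_mul (Real.rpow_nonneg (jap_pos n).le _), ← japE_rpow,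
    ENNReal.ofReal_pow (norm_nonneg _), ofReal_norm, weightedSq]

lemma sobE_enorm_le_ofReal_hnorm {s : ℝ} (hs0 : -1 / 2 < s) (hs : s < 1 / 2) {f : ℤ → ℂ}
    (hf : memH (1 / 2) f) :
    sobE ((1 / 2 + s) / 2) (fun k => ‖f k‖ₑ)
      ≤ ENNReal.ofReal (hnorm (1 / 2) f ^ (1 + 2 * s) * hnorm 0 f ^ (1 - 2 * s)) := by
  have h := sobE_le_rpow_mul_rpow (θ := 1 / 2 + s) (by linarith) (by linarith) 0 (1 / 2)
    (fun k => ‖f k‖ₑ)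
  rw [show (1 / 2 + s) * (1 / 2) + (1 - (1 / 2 + s)) * 0 = (1 / 2 + s) / 2 by ring,
    ← ofReal_hnorm_sq hf, ← ofReal_hnorm_sq (memH_mono (s := 0) (by norm_num) hf),
    ENNReal.ofReal_rpow_of_nonneg (sq_nonneg _) (by linarith),
    ENNReal.ofReal_rpow_of_nonneg (sq_nonneg _) (by linarith),
    ← ENNReal.ofReal_mul (by positivity), ← Real.rpow_natCast, ← Real.rpow_natCast,
    ← Real.rpow_mul (hnorm_nonneg _ _), ← Real.rpow_mul (hnorm_nonneg _ _)] at h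
  convert h using 4 <;> push_cast <;> ring

lemma tsum_enorm_mul_conj_sub (f : ℤ → ℂ) (n : ℤ) :
    ∑' k, ‖f k * conj (f (k - n))‖ₑ = corr (fun k => ‖f k‖ₑ) n := by
  rw [corr, ← (Equiv.addRight n).tsum_eq]
  refine tsum_congr fun j => ?_
  rw [Equiv.coe_addRight, add_sub_cancel_right, enorm_mul, RCLike.enorm_conj, mul_comm]

lemma summable_mul_conj_sub {f : ℤ → ℂ} (hf : memH 0 f) (n : ℤ) :
    Summable fun k => f k * conj (f (k - n)) := by
  refine .of_enorm ?_
  rw [tsum_enorm_mul_conj_sub]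
  refine ne_top_of_le_ne_top ?_ (corr_le_sobE_zero _ n)
  rw [← ofReal_hnorm_sq hf]
  exact ENNReal.ofReal_ne_top

theorem tsum_enorm_mul_corr_le {s : ℝ} (hs0 : -1 / 2 < s) (hs : s < 1 / 2) {u f : ℤ → ℂ}
    (hu : memH (-s) u) (hf0 : ∀ n < 0, f n = 0) (hf : memH (1 / 2) f) :
    ∑' n, ‖u n‖ₑ * corr (fun k => ‖f k‖ₑ) n
      ≤ ENNReal.ofReal (√(paraproductConst ((1 / 2 + s) / 2)) * hnorm (-s) u
          * hnorm (1 / 2) f ^ (1 + 2 * s) * hnorm 0 f ^ (1 - 2 * s)) := by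
  set K := paraproductConst ((1 / 2 + s) / 2)
  have hK : 0 ≤ K := (paraproductConst_pos (by linarith) (by linarith)).le
  have hr := hnorm_nonneg (-s) u
  have hR := hnorm_nonneg (1 / 2) f
  have hB := hnorm_nonneg 0 f
  have hpara := sobE_corr_le (fun k => ‖f k‖ₑ) (σ := (1 / 2 + s) / 2) (by linarith)
    (by linarith) fun j hj => by simp [hf0 j hj]
  rw [show 2 * ((1 / 2 + s) / 2) - 1 / 2 = s by ring] at hpara
  rw [← ENNReal.pow_le_pow_left_iff two_ne_zero]
  calc (∑' n, ‖u n‖ₑ * corr (fun k => ‖f k‖ₑ) n) ^ 2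
      ≤ sobE (-s) (fun n => ‖u n‖ₑ) * sobE s (corr fun k => ‖f k‖ₑ) :=
        sq_tsum_mul_le_sobE _ _ s
    _ ≤ ENNReal.ofReal (hnorm (-s) u ^ 2) * (ENNReal.ofReal K
          * ENNReal.ofReal (hnorm (1 / 2) f ^ (1 + 2 * s) * hnorm 0 f ^ (1 - 2 * s)) ^ 2) := by
        rw [ofReal_hnorm_sq hu]
        gcongr
        exact hpara.trans (by gcongr; exact sobE_enorm_le_ofReal_hnorm hs0 hs hf)
    _ = _ := by
        rw [← ENNReal.ofReal_pow (by positivity), ← ENNReal.ofReal_mul hK,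
          ← ENNReal.ofReal_mul (sq_nonneg _), ← ENNReal.ofReal_pow (by positivity)]
        congr 1
        simp only [mul_pow, Real.sq_sqrt hK]
        ring

lemma mul_rpow_mul_rpow_le {θ P R B : ℝ} (hθ0 : 0 < θ) (hθ1 : θ < 1) (hP : 0 ≤ P) (hR : 0 ≤ R)
    (hB : 0 ≤ B) :
    P * R ^ (2 * θ) * B ^ (2 * (1 - θ))
      ≤ 1 / 2 * R ^ 2 + (1 - θ) * (P * (2 * θ) ^ θ) ^ (1 / (1 - θ)) * B ^ 2 := by
  have hθ1' : 0 < 1 - θ := by linarith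
  set Q := P * (2 * θ) ^ θ
  have hQ : 0 ≤ Q := by positivity
  have hX : (R ^ 2 / (2 * θ)) ^ θ = R ^ (2 * θ) / (2 * θ) ^ θ := by
    rw [Real.div_rpow (sq_nonneg R) (by positivity), ← Real.rpow_natCast, ← Real.rpow_mul hR]
    norm_num
  have hY : (Q ^ (1 / (1 - θ)) * B ^ 2) ^ (1 - θ) = Q * B ^ (2 * (1 - θ)) := by
    rw [Real.mul_rpow (by positivity) (sq_nonneg B), ← Real.rpow_mul hQ,
      one_div_mul_cancel hθ1'.ne', Real.rpow_one, ← Real.rpow_natCast, ← Real.rpow_mul hB]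
    norm_num
  have hamgm := Real.geom_mean_le_arith_mean2_weighted hθ0.le hθ1'.le
    (p₁ := R ^ 2 / (2 * θ)) (p₂ := Q ^ (1 / (1 - θ)) * B ^ 2) (by positivity) (by positivity)
    (by ring)
  have hfirst : θ * (R ^ 2 / (2 * θ)) = 1 / 2 * R ^ 2 := by field_simp
  rw [hX, hY, hfirst] at hamgm
  have : (2 * θ) ^ θ ≠ 0 := by positivity
  calc P * R ^ (2 * θ) * B ^ (2 * (1 - θ))
      = R ^ (2 * θ) / (2 * θ) ^ θ * (Q * B ^ (2 * (1 - θ))) := by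
        simp only [Q]
        field_simp
    _ ≤ _ := hamgm
    _ = _ := by ring

lemma exists_young_etaS {s : ℝ} (hs0 : -1 / 2 < s) (hs : s < 1 / 2) {M : ℝ} (hM : 0 < M) :
    ∃ C > 0, ∀ r R B : ℝ, 0 ≤ r → 0 ≤ R → 0 ≤ B →
      M * r * R ^ (1 + 2 * s) * B ^ (1 - 2 * s) ≤ 1 / 2 * R ^ 2 + etaS s C r * B ^ 2 := by
  set θ := (1 + 2 * s) / 2 with hθ
  set α := (1 + 2 * s) / (1 - 2 * s) with hα
  have hθ0 : 0 < θ := by linarith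
  have hθ1 : 0 < 1 - θ := by linarith
  have hα0 : 0 ≤ α := div_nonneg (by linarith) (by linarith)
  have h2s : 1 - 2 * s ≠ 0 := (by linarith : 0 < 1 - 2 * s).ne'
  have hexp : 1 / (1 - θ) = 1 + α := by
    rw [hθ, hα, show 1 - (1 + 2 * s) / 2 = (1 - 2 * s) / 2 by ring, one_div_div]
    field_simp
    ring
  have hθα : θ * (1 + α) = α := by
    rw [hθ, hα]
    field_simp
    ring
  set V := (1 - θ) * (2 * θ) ^ α * M ^ (1 + α)
  have hV : 0 < V := by positivity
  refine ⟨√V, Real.sqrt_pos.2 hV, fun r R B hr hR hB => ?_⟩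
  have hpow : (M * r * (2 * θ) ^ θ) ^ (1 / (1 - θ)) = M ^ (1 + α) * (2 * θ) ^ α * (r * r ^ α) := by
    rw [hexp, Real.mul_rpow (by positivity) (by positivity), Real.mul_rpow hM.le hr,
      ← Real.rpow_mul (by positivity), hθα, Real.rpow_add' hr (by linarith), Real.rpow_one]
    ring
  calc M * r * R ^ (1 + 2 * s) * B ^ (1 - 2 * s) = M * r * R ^ (2 * θ) * B ^ (2 * (1 - θ)) := by
        rw [hθ]
        ring_nf
    _ ≤ 1 / 2 * R ^ 2 + V * r * r ^ α * B ^ 2 := by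
        refine (mul_rpow_mul_rpow_le hθ0 (by linarith) (by positivity) hR hB).trans_eq ?_
        rw [hpow]
        ring
    _ ≤ 1 / 2 * R ^ 2 + V * r * (2 * (1 + r)) ^ α * B ^ 2 := by
        gcongr
        linarith
    _ = 1 / 2 * R ^ 2 + etaS s √V r * B ^ 2 := by
        rw [etaS, ← hα, Real.sq_sqrt hV.le]
        ring

end HardySobolev

open HardySobolev in
/-- The pairing `⟨u | f·conj f⟩` is written on the Fourier side: `⟨u|g⟩ = Σ_n û(n) conj(ĝ(n))`,
where `ĝ(n) = Σ_k f̂(k) conj(f̂(k-n))` are the Fourier coefficients of `f·conj f`. -/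
theorem stmt2 (s : ℝ) (hs0 : 0 ≤ s) (hs : s < 1/2) :
    ∃ C : ℝ, 0 < C ∧ ∀ u : ℤ → ℂ,
      (∀ n : ℤ, u (-n) = conj (u n)) → u 0 = 0 → memH (-s) u →
      ∀ f : ℤ → ℂ, (∀ n : ℤ, n < 0 → f n = 0) → memH (1/2) f →
      (∀ n : ℤ, Summable fun k : ℤ => f k * conj (f (k - n))) ∧
      (Summable fun n : ℤ => u n * conj (∑' k : ℤ, f k * conj (f (k - n)))) ∧
      ‖∑' n : ℤ, u n * conj (∑' k : ℤ, f k * conj (f (k - n)))‖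
        ≤ (1/2) * hnorm (1/2) f ^ 2 + etaS s C (hnorm (-s) u) * hnorm 0 f ^ 2 := by
  have hs' : -1 / 2 < s := by linarith
  obtain ⟨C, hC, hyoung⟩ := exists_young_etaS hs' hs
    (Real.sqrt_pos.2 (paraproductConst_pos (σ := (1 / 2 + s) / 2) (by linarith) (by linarith)))
  refine ⟨C, hC, fun u _ _ hu f hf0 hf => ?_⟩
  set g := fun n => ∑' k, f k * conj (f (k - n))
  have hterm : ∀ n, ‖u n * conj (g n)‖ₑ ≤ ‖u n‖ₑ * corr (fun k => ‖f k‖ₑ) n := fun n => by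
    rw [enorm_mul, RCLike.enorm_conj, ← tsum_enorm_mul_conj_sub]
    gcongr
    exact enorm_tsum_le_tsum_enorm
  have hpair := (ENNReal.tsum_le_tsum hterm).trans (tsum_enorm_mul_corr_le hs' hs hu hf0 hf)
  have hpair_ne_top := ne_top_of_le_ne_top ENNReal.ofReal_ne_top hpair
  refine ⟨summable_mul_conj_sub (memH_mono (by norm_num) hf), .of_enorm hpair_ne_top, ?_⟩
  calc ‖∑' n, u n * conj (g n)‖ = ‖∑' n, u n * conj (g n)‖ₑ.toReal := (toReal_enorm _).symm
    _ ≤ (∑' n, ‖u n * conj (g n)‖ₑ).toReal :=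
        ENNReal.toReal_mono hpair_ne_top enorm_tsum_le_tsum_enorm
    _ ≤ _ := ENNReal.toReal_le_of_le_ofReal (by unfold hnorm; positivity) hpair
    _ ≤ _ := hyoung _ _ _ (hnorm_nonneg _ _) (hnorm_nonneg _ _) (hnorm_nonneg _ _)
end

section
/- Let u ∈ H^{-s}(𝕋, ℝ) with mean zero and 0 ≤ s < 1/2, and define the sesquilinear form Q_u⁺(f,g) = ⟨-i∂_x f | g⟩ - ⟨u | g·conj(f)⟩ + (1 + η_s(‖u‖_{-s}))⟨f | g⟩ on H^{1/2}_+. Then Q_u⁺ is positive and satisfies (1/2)‖f‖_{1/2}² ≤ Q_u⁺(f,f) ≤ (3 + 2η_s(‖u‖_{-s}))‖f‖_{1/2}² for all f ∈ H^{1/2}_+. -/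
open scoped BigOperators ComplexConjugate

/-!
Write `A = ‖f‖²_{1/2}`, `P = ‖f‖²_0` and `D = ⟨-i∂ₓf|f⟩`. Then `P ≤ A`, `D ≤ A`, and
`A ≤ D + P` because `f̂` lives on `n ≥ 0`; the Toeplitz term `T = ⟨u|f f̄⟩` is real because `u` is.
Both bounds then follow from `|T| ≤ A/2 + η P`.

For that, `|T| ≤ ∑ₙ |û n| ∑ₖ |f̂ k| |f̂ (k - n)|`, and by the symmetry of `|û|` it suffices to sum
over `0 ≤ l ≤ k`. There a weighted Cauchy–Schwarz inequality (a Schur test) with the kernel bound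
`∑_{0 ≤ l ≤ k} ⟨k - l⟩^{2s} ⟨l⟩^{-θ} ≲ ⟨k⟩^θ`, `θ = s + 1/2`, gives `|T| ≲ ‖u‖_{-s} ‖f‖²_{θ/2}`.
Hölder's inequality `‖f‖²_{θ/2} ≤ A^θ P^{1-θ}` and Young's inequality finish the proof.
-/

open scoped ENNReal

theorem ENNReal.tsum_rpow_mul_rpow_le {ι : Type*} (x y : ι → ℝ≥0∞) {p q : ℝ}
    (hp : 0 ≤ p) (hq : 0 ≤ q) (hpq : p + q = 1) :
    ∑' i, x i ^ p * y i ^ q ≤ (∑' i, x i) ^ p * (∑' i, y i) ^ q := by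
  let _ : MeasurableSpace ι := ⊤
  simpa only [MeasureTheory.lintegral_count] using
    ENNReal.lintegral_mul_norm_pow_le (μ := MeasureTheory.Measure.count (α := ι))
      Measurable.of_discrete.aemeasurable Measurable.of_discrete.aemeasurable hp hq hpq

lemma ENNReal.sq_rpow_inv_two (x : ℝ≥0∞) : (x ^ 2) ^ (2⁻¹ : ℝ) = x := by
  simpa using ENNReal.pow_rpow_inv_natCast two_ne_zero x

lemma ENNReal.ofReal_sqrt {x : ℝ} (hx : 0 ≤ x) :
    ENNReal.ofReal √x = ENNReal.ofReal x ^ (2⁻¹ : ℝ) := by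
  rw [Real.sqrt_eq_rpow, ENNReal.ofReal_rpow_of_nonneg hx (by norm_num), one_div]

lemma one_le_jap (n : ℤ) : 1 ≤ jap n := le_max_left _ _

lemma jap_pos (n : ℤ) : 0 < jap n := zero_lt_one.trans_le (one_le_jap n)

lemma intCast_le_jap (n : ℤ) : (n : ℝ) ≤ jap n := (le_abs_self _).trans (le_max_right _ _)

lemma jap_le_intCast_add_one {n : ℤ} (hn : 0 ≤ n) : jap n ≤ n + 1 := by
  have : (0 : ℝ) ≤ n := by exact_mod_cast hn
  exact max_le (by linarith) (by rw [abs_of_nonneg this]; linarith)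

lemma jap_le_jap {m n : ℤ} (h : |m| ≤ |n|) : jap m ≤ jap n :=
  max_le_max le_rfl (by simpa only [← Int.cast_abs] using (Int.cast_le (R := ℝ)).2 h)

lemma jap_natCast {m : ℕ} (hm : m ≠ 0) : jap m = m := by
  have : (1 : ℝ) ≤ m := by exact_mod_cast Nat.one_le_iff_ne_zero.2 hm
  simp [jap, this]

lemma hnormSq_half (v : ℤ → ℂ) : hnormSq (1 / 2) v = ∑' n, jap n * ‖v n‖ ^ 2 := by
  simp [hnormSq]

lemma hnormSq_zero (v : ℤ → ℂ) : hnormSq 0 v = ∑' n, ‖v n‖ ^ 2 := by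
  simp [hnormSq]

lemma memH_half_iff {v : ℤ → ℂ} : memH (1 / 2) v ↔ Summable fun n => jap n * ‖v n‖ ^ 2 := by
  simp [memH]

lemma hnormSq_nonneg (t : ℝ) (v : ℤ → ℂ) : 0 ≤ hnormSq t v :=
  tsum_nonneg fun n => mul_nonneg (Real.rpow_nonneg (jap_pos n).le _) (sq_nonneg _)

lemma hnorm_nonneg (t : ℝ) (v : ℤ → ℂ) : 0 ≤ hnorm t v := Real.sqrt_nonneg _

lemma memH_anti {t t' : ℝ} (h : t ≤ t') {v : ℤ → ℂ} (hv : memH t' v) : memH t v :=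
  hv.of_nonneg_of_le (fun n => mul_nonneg (Real.rpow_nonneg (jap_pos n).le _) (sq_nonneg _))
    fun n => by gcongr; exact one_le_jap n

lemma hnormSq_mono {t t' : ℝ} (h : t ≤ t') {v : ℤ → ℂ} (hv : memH t' v) :
    hnormSq t v ≤ hnormSq t' v :=
  (memH_anti h hv).tsum_le_tsum (fun n => by gcongr; exact one_le_jap n) hv

lemma tsum_mul_conj_self (f : ℤ → ℂ) : ∑' n, f n * conj (f n) = (hnormSq 0 f : ℂ) := by
  rw [hnormSq_zero, Complex.ofReal_tsum]
  exact tsum_congr fun n => by rw [Complex.mul_conj, Complex.normSq_eq_norm_sq]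

lemma tsum_intCast_mul_mul_conj_self (f : ℤ → ℂ) :
    ∑' n : ℤ, (n : ℂ) * (f n * conj (f n)) = ((∑' n : ℤ, (n : ℝ) * ‖f n‖ ^ 2 : ℝ) : ℂ) := by
  rw [Complex.ofReal_tsum]
  exact tsum_congr fun n => by rw [Complex.mul_conj, Complex.normSq_eq_norm_sq]; push_cast; rfl

section HardySobolev

variable {f : ℤ → ℂ} (hf : memH (1 / 2) f)
include hf

lemma summable_intCast_mul_norm_sq : Summable fun n : ℤ => (n : ℝ) * ‖f n‖ ^ 2 := by
  refine .of_norm_bounded (memH_half_iff.1 hf) fun n => ?_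
  rw [norm_mul, Real.norm_of_nonneg (sq_nonneg _), Real.norm_eq_abs]
  exact mul_le_mul_of_nonneg_right (le_max_right _ _) (sq_nonneg _)

lemma tsum_intCast_mul_norm_sq_le_hnormSq :
    ∑' n : ℤ, (n : ℝ) * ‖f n‖ ^ 2 ≤ hnormSq (1 / 2) f := by
  rw [hnormSq_half]
  exact (summable_intCast_mul_norm_sq hf).tsum_le_tsum
    (fun n => mul_le_mul_of_nonneg_right (intCast_le_jap n) (sq_nonneg _)) (memH_half_iff.1 hf)

lemma hnormSq_le_tsum_intCast_mul_norm_sq_add (hf0 : ∀ n < 0, f n = 0) :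
    hnormSq (1 / 2) f ≤ ∑' n : ℤ, (n : ℝ) * ‖f n‖ ^ 2 + hnormSq 0 f := by
  have hP : Summable fun n => ‖f n‖ ^ 2 := by
    simpa [memH] using memH_anti (t := 0) (by norm_num) hf
  have hD := summable_intCast_mul_norm_sq hf
  rw [hnormSq_half, hnormSq_zero, ← hD.tsum_add hP]
  refine (memH_half_iff.1 hf).tsum_le_tsum (fun n => ?_) (hD.add hP)
  rcases lt_or_ge n 0 with hn | hn
  · simp [hf0 n hn]
  · nlinarith [jap_le_intCast_add_one hn, sq_nonneg ‖f n‖]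

end HardySobolev

lemma autocorrelation_neg (f : ℤ → ℂ) (n : ℤ) :
    ∑' k, f k * conj (f (k + n)) = conj (∑' k, f k * conj (f (k - n))) := by
  rw [Complex.conj_tsum, ← (Equiv.addRight n).tsum_eq fun k => conj (f k * conj (f (k - n)))]
  refine tsum_congr fun k => ?_
  simp [mul_comm]

lemma conj_tsum_mul_conj_autocorrelation {u : ℤ → ℂ} (hu : ∀ n, u (-n) = conj (u n))
    (f : ℤ → ℂ) :
    conj (∑' n, u n * conj (∑' k, f k * conj (f (k - n))))
      = ∑' n, u n * conj (∑' k, f k * conj (f (k - n))) := by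
  rw [Complex.conj_tsum, ← (Equiv.neg ℤ).tsum_eq]
  refine tsum_congr fun n => ?_
  simp [hu, autocorrelation_neg]

lemma rpow_neg_le_rpow_sub_rpow {x θ : ℝ} (hx : 1 ≤ x) (hθ0 : 0 ≤ θ) (hθ1 : θ ≤ 1) :
    (1 - θ) * x ^ (-θ) ≤ x ^ (1 - θ) - (x - 1) ^ (1 - θ) := by
  have hx0 : 0 < x := zero_lt_one.trans_le hx
  have hx' : -1 ≤ -x⁻¹ := by simpa using inv_le_one_of_one_le₀ hx
  have bernoulli := rpow_one_add_le_one_add_mul_self hx' (p := 1 - θ) (by linarith) (by linarith)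
  have hsub : (x - 1) ^ (1 - θ) = x ^ (1 - θ) * (1 + -x⁻¹) ^ (1 - θ) := by
    rw [← Real.mul_rpow hx0.le (by linarith)]
    congr 1
    field_simp
    ring
  have hdiv : x ^ (1 - θ) * x⁻¹ = x ^ (-θ) := by
    rw [← Real.rpow_neg_one, ← Real.rpow_add hx0]; ring_nf
  rw [hsub]
  nlinarith [Real.rpow_nonneg hx0.le (1 - θ)]

lemma sum_range_jap_rpow_neg_le {θ : ℝ} (hθ0 : 0 ≤ θ) (hθ1 : θ < 1) (m : ℕ) :
    ∑ i ∈ Finset.range (m + 1), jap i ^ (-θ) ≤ 1 + (m : ℝ) ^ (1 - θ) / (1 - θ) := by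
  have hθ : 0 < 1 - θ := by linarith
  induction m with
  | zero => simp [jap, Real.zero_rpow hθ.ne']
  | succ m ih =>
    have step := rpow_neg_le_rpow_sub_rpow (x := m + 1) (by simp) hθ0 hθ1.le
    rw [add_sub_cancel_right, ← le_div_iff₀' hθ] at step
    rw [Finset.sum_range_succ, jap_natCast m.succ_ne_zero]
    push_cast
    calc _ ≤ 1 + (m : ℝ) ^ (1 - θ) / (1 - θ)
          + ((m + 1 : ℝ) ^ (1 - θ) - (m : ℝ) ^ (1 - θ)) / (1 - θ) := by gcongr
      _ = _ := by ring

lemma sum_range_jap_rpow_neg_le_mul {θ : ℝ} (hθ0 : 0 ≤ θ) (hθ1 : θ < 1) (m : ℕ) :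
    ∑ i ∈ Finset.range (m + 1), jap i ^ (-θ) ≤ (1 + 1 / (1 - θ)) * jap m ^ (1 - θ) := by
  have hθ : 0 < 1 - θ := by linarith
  have h1 : 1 ≤ jap m ^ (1 - θ) := Real.one_le_rpow (one_le_jap m) hθ.le
  have h2 : (m : ℝ) ^ (1 - θ) ≤ jap m ^ (1 - θ) :=
    Real.rpow_le_rpow m.cast_nonneg (by exact_mod_cast intCast_le_jap m) hθ.le
  calc _ ≤ 1 + (m : ℝ) ^ (1 - θ) / (1 - θ) := sum_range_jap_rpow_neg_le hθ0 hθ1 m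
    _ ≤ jap m ^ (1 - θ) + jap m ^ (1 - θ) / (1 - θ) := by gcongr
    _ = _ := by ring

lemma tsum_ite_nonneg_le_eq_sum_range (g : ℤ → ℝ≥0∞) (m : ℕ) :
    ∑' l : ℤ, (if 0 ≤ l ∧ l ≤ m then g l else 0) = ∑ i ∈ Finset.range (m + 1), g i := by
  rw [tsum_eq_sum (s := (Finset.range (m + 1)).map Nat.castEmbedding), Finset.sum_map]
  · refine Finset.sum_congr rfl fun i hi => ?_
    have : i ≤ m := by simpa [Nat.lt_succ_iff] using hi
    simp [this]
  · intro l hl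
    simp only [Finset.mem_map, Finset.mem_range, Nat.castEmbedding_apply, not_exists,
      not_and] at hl
    rw [if_neg]
    rintro ⟨h0, hm⟩
    exact hl l.toNat (by omega) (by omega)

noncomputable def japE (n : ℤ) : ℝ≥0∞ := ENNReal.ofReal (jap n)

lemma japE_ne_zero (n : ℤ) : japE n ≠ 0 := by
  simpa [japE] using jap_pos n

lemma japE_ne_top (n : ℤ) : japE n ≠ ⊤ := ENNReal.ofReal_ne_top

lemma japE_rpow_mul_rpow_neg (n : ℤ) (t : ℝ) : japE n ^ t * japE n ^ (-t) = 1 := by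
  rw [← ENNReal.rpow_add _ _ (japE_ne_zero n) (japE_ne_top n), add_neg_cancel, ENNReal.rpow_zero]

lemma tsum_ite_japE_rpow_neg_le {θ : ℝ} (hθ0 : 0 ≤ θ) (hθ1 : θ < 1) (k : ℤ) :
    ∑' l : ℤ, (if 0 ≤ l ∧ l ≤ k then japE l ^ (-θ) else 0)
      ≤ ENNReal.ofReal (1 + 1 / (1 - θ)) * japE k ^ (1 - θ) := by
  rcases lt_or_ge k 0 with hk | hk
  · simp [show ∀ l : ℤ, ¬(0 ≤ l ∧ l ≤ k) by omega]
  lift k to ℕ using hk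
  have hθ : 0 < 1 - θ := by linarith
  rw [tsum_ite_nonneg_le_eq_sum_range]
  simp only [japE, ENNReal.ofReal_rpow_of_pos (jap_pos _)]
  rw [← ENNReal.ofReal_sum_of_nonneg (fun i _ => (Real.rpow_pos_of_pos (jap_pos _) _).le),
    ← ENNReal.ofReal_mul (by positivity)]
  exact ENNReal.ofReal_le_ofReal (sum_range_jap_rpow_neg_le_mul hθ0 hθ1 k)

-- `‖a‖²_{H^t}`, valued in `ℝ≥0∞` so that no summability hypotheses are needed.
noncomputable def ennHnormSq (t : ℝ) (a : ℤ → ℝ≥0∞) : ℝ≥0∞ := ∑' n, japE n ^ (2 * t) * a n ^ 2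

lemma ennHnormSq_enorm {t : ℝ} {v : ℤ → ℂ} (hv : memH t v) :
    ennHnormSq t (fun n => ‖v n‖ₑ) = ENNReal.ofReal (hnormSq t v) := by
  rw [hnormSq, ENNReal.ofReal_tsum_of_nonneg
    (fun n => mul_nonneg (Real.rpow_nonneg (jap_pos n).le _) (sq_nonneg _)) hv]
  refine tsum_congr fun n => ?_
  rw [ENNReal.ofReal_mul (Real.rpow_nonneg (jap_pos n).le _), japE,
    ENNReal.ofReal_rpow_of_pos (jap_pos n), ENNReal.ofReal_pow (norm_nonneg _), ofReal_norm]

lemma ennHnormSq_le_rpow_mul_rpow {θ : ℝ} (h0 : 0 ≤ θ) (h1 : θ ≤ 1) (a : ℤ → ℝ≥0∞) :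
    ennHnormSq (θ / 2) a ≤ ennHnormSq (1 / 2) a ^ θ * ennHnormSq 0 a ^ (1 - θ) := by
  have hpoint (n : ℤ) : japE n ^ (2 * (θ / 2)) * a n ^ 2
      = (japE n ^ (2 * (1 / 2 : ℝ)) * a n ^ 2) ^ θ
        * (japE n ^ (2 * 0 : ℝ) * a n ^ 2) ^ (1 - θ) := by
    rw [show 2 * (1 / 2 : ℝ) = 1 by norm_num, show (2 * 0 : ℝ) = 0 by norm_num,
      mul_div_cancel₀ θ two_ne_zero, ENNReal.rpow_one, ENNReal.rpow_zero, one_mul,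
      ENNReal.mul_rpow_of_nonneg _ _ h0, mul_assoc,
      ← ENNReal.rpow_add_of_nonneg _ _ h0 (by linarith), add_sub_cancel, ENNReal.rpow_one]
  simp only [ennHnormSq, hpoint]
  exact ENNReal.tsum_rpow_mul_rpow_le _ _ h0 (by linarith) (by ring)

lemma tsum_mul_tsum_mul_sub_eq (a v : ℤ → ℝ≥0∞) :
    ∑' n, v n * ∑' k, a k * a (k - n) = ∑' k, ∑' l, v (k - l) * a k * a l := by
  simp_rw [← ENNReal.tsum_mul_left]
  rw [ENNReal.tsum_comm]
  refine tsum_congr fun k => ?_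
  rw [← (Equiv.subLeft k).tsum_eq]
  simp only [Equiv.subLeft_apply, sub_sub_cancel]
  exact tsum_congr fun l => by ring

lemma tsum_tsum_le_two_mul_tsum_tsum_ite (a v : ℤ → ℝ≥0∞) (ha : ∀ n < 0, a n = 0)
    (hv : ∀ n, v (-n) = v n) :
    ∑' k, ∑' l, v (k - l) * a k * a l
      ≤ 2 * ∑' k, ∑' l, if 0 ≤ l ∧ l ≤ k then v (k - l) * a k * a l else 0 := by
  set G : ℤ → ℤ → ℝ≥0∞ := fun k l => if 0 ≤ l ∧ l ≤ k then v (k - l) * a k * a l else 0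
  have hpoint (k l : ℤ) : v (k - l) * a k * a l ≤ G k l + G l k := by
    rcases lt_or_ge k 0 with hk | hk
    · simp [ha k hk]
    rcases lt_or_ge l 0 with hl | hl
    · simp [ha l hl]
    rcases le_total l k with hlk | hkl
    · simp [G, hk, hl, hlk]
    · have : v (l - k) * a l * a k = v (k - l) * a k * a l := by
        rw [← neg_sub, hv, mul_right_comm]
      simp [G, hk, hl, hkl, this]
  calc _ ≤ ∑' k, ∑' l, (G k l + G l k) :=
        ENNReal.tsum_le_tsum fun k => ENNReal.tsum_le_tsum (hpoint k)
    _ = 2 * ∑' k, ∑' l, G k l := by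
        simp_rw [ENNReal.tsum_add]
        rw [ENNReal.tsum_comm (f := fun k l => G l k), two_mul]

lemma tsum_tsum_ite_mul_le (s t : ℝ) (a v : ℤ → ℝ≥0∞) :
    ∑' k, ∑' l, (if 0 ≤ l ∧ l ≤ k then
        japE (k - l) ^ (-(2 * s)) * v (k - l) ^ 2 * (japE l ^ (2 * t) * a l ^ 2) else 0)
      ≤ ennHnormSq (-s) v * ennHnormSq t a := by
  calc _ ≤ ∑' k, ∑' l, japE (k - l) ^ (-(2 * s)) * v (k - l) ^ 2 * (japE l ^ (2 * t) * a l ^ 2) :=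
        ENNReal.tsum_le_tsum fun k => ENNReal.tsum_le_tsum fun l => by split_ifs <;> simp
    _ = ∑' l, ennHnormSq (-s) v * (japE l ^ (2 * t) * a l ^ 2) := by
        rw [ENNReal.tsum_comm]
        refine tsum_congr fun l => ?_
        rw [ENNReal.tsum_mul_right, ennHnormSq, mul_neg]
        congr 1
        exact (Equiv.subRight l).tsum_eq fun n => japE n ^ (-(2 * s)) * v n ^ 2
    _ = _ := ENNReal.tsum_mul_left

noncomputable def schurConst (s : ℝ) : ℝ := 1 + 1 / (1 / 2 - s)

lemma schurConst_pos {s : ℝ} (hs : s < 1 / 2) : 0 < schurConst s := by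
  have : 0 < 1 / (1 / 2 - s) := one_div_pos.2 (by linarith)
  rw [schurConst]; linarith

section Autocorrelation

variable {s : ℝ} (hs0 : 0 ≤ s) (hs : s < 1 / 2)
include hs0 hs

lemma tsum_ite_kernel_le (k : ℤ) :
    ∑' l : ℤ, (if 0 ≤ l ∧ l ≤ k then japE (k - l) ^ (2 * s) * japE l ^ (-(s + 1 / 2)) else 0)
      ≤ ENNReal.ofReal (schurConst s) * japE k ^ (s + 1 / 2) := by
  have hpoint (l : ℤ) :
      (if 0 ≤ l ∧ l ≤ k then japE (k - l) ^ (2 * s) * japE l ^ (-(s + 1 / 2)) else 0)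
        ≤ japE k ^ (2 * s) * if 0 ≤ l ∧ l ≤ k then japE l ^ (-(s + 1 / 2)) else 0 := by
    split_ifs with hl
    · gcongr
      refine ENNReal.ofReal_le_ofReal (jap_le_jap ?_)
      rw [abs_of_nonneg (by omega), abs_of_nonneg (by omega)]
      omega
    · rw [mul_zero]
  have hsum := tsum_ite_japE_rpow_neg_le (θ := s + 1 / 2) (by linarith) (by linarith) k
  rw [show 1 - (s + 1 / 2) = 1 / 2 - s by ring] at hsum
  calc _ ≤ japE k ^ (2 * s) * ∑' l : ℤ, (if 0 ≤ l ∧ l ≤ k then japE l ^ (-(s + 1 / 2)) else 0) := by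
        rw [← ENNReal.tsum_mul_left]; exact ENNReal.tsum_le_tsum hpoint
    _ ≤ japE k ^ (2 * s) * (ENNReal.ofReal (schurConst s) * japE k ^ (1 / 2 - s)) := by
        gcongr; exact hsum
    _ = _ := by
        rw [mul_left_comm, ← ENNReal.rpow_add _ _ (japE_ne_zero k) (japE_ne_top k)]
        ring_nf

lemma tsum_tsum_ite_kernel_mul_le (a : ℤ → ℝ≥0∞) :
    ∑' k, ∑' l, (if 0 ≤ l ∧ l ≤ k then
        japE (k - l) ^ (2 * s) * japE l ^ (-(s + 1 / 2)) * a k ^ 2 else 0)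
      ≤ ENNReal.ofReal (schurConst s) * ennHnormSq ((s + 1 / 2) / 2) a := by
  calc _ = ∑' k, (∑' l, if 0 ≤ l ∧ l ≤ k then
          japE (k - l) ^ (2 * s) * japE l ^ (-(s + 1 / 2)) else 0) * a k ^ 2 := by
        refine tsum_congr fun k => ?_
        rw [← ENNReal.tsum_mul_right]
        exact tsum_congr fun l => by split_ifs <;> simp
    _ ≤ ∑' k, ENNReal.ofReal (schurConst s) * japE k ^ (s + 1 / 2) * a k ^ 2 := by
        gcongr with k
        exact tsum_ite_kernel_le hs0 hs k
    _ = _ := by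
        simp only [ennHnormSq, mul_div_cancel₀ (s + 1 / 2) two_ne_zero, mul_assoc,
          ENNReal.tsum_mul_left]

/-- The Schur test: Cauchy–Schwarz with the weights `⟨k - l⟩^{∓s} ⟨l⟩^{±θ/2}`, `θ = s + 1/2`. -/
lemma tsum_tsum_ite_le (a v : ℤ → ℝ≥0∞) :
    ∑' k, ∑' l, (if 0 ≤ l ∧ l ≤ k then v (k - l) * a k * a l else 0)
      ≤ ENNReal.ofReal (schurConst s) ^ (2⁻¹ : ℝ) * ennHnormSq (-s) v ^ (2⁻¹ : ℝ)
        * ennHnormSq ((s + 1 / 2) / 2) a := by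
  set θ := s + 1 / 2
  set K := ENNReal.ofReal (schurConst s)
  set V := ennHnormSq (-s) v
  set A := ennHnormSq (θ / 2) a
  let x : ℤ × ℤ → ℝ≥0∞ := fun p => if 0 ≤ p.2 ∧ p.2 ≤ p.1 then
    japE (p.1 - p.2) ^ (-(2 * s)) * v (p.1 - p.2) ^ 2 * (japE p.2 ^ (2 * (θ / 2)) * a p.2 ^ 2)
    else 0
  let y : ℤ × ℤ → ℝ≥0∞ := fun p => if 0 ≤ p.2 ∧ p.2 ≤ p.1 then
    japE (p.1 - p.2) ^ (2 * s) * japE p.2 ^ (-θ) * a p.1 ^ 2 else 0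
  have hxy (k l : ℤ) : (if 0 ≤ l ∧ l ≤ k then v (k - l) * a k * a l else 0)
      = x (k, l) ^ (2⁻¹ : ℝ) * y (k, l) ^ (2⁻¹ : ℝ) := by
    simp only [x, y, mul_div_cancel₀ θ two_ne_zero]
    split_ifs
    · rw [← ENNReal.mul_rpow_of_nonneg _ _ (by norm_num), ← ENNReal.sq_rpow_inv_two (_ * a l)]
      congr 1
      calc (v (k - l) * a k * a l) ^ 2
          = (japE (k - l) ^ (2 * s) * japE (k - l) ^ (-(2 * s))) * (japE l ^ θ * japE l ^ (-θ))
            * (v (k - l) * a k * a l) ^ 2 := by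
            rw [japE_rpow_mul_rpow_neg, japE_rpow_mul_rpow_neg, one_mul, one_mul]
        _ = _ := by ring
    · simp
  calc _ = ∑' p, x p ^ (2⁻¹ : ℝ) * y p ^ (2⁻¹ : ℝ) := by
        rw [ENNReal.tsum_prod']; exact tsum_congr fun k => tsum_congr (hxy k)
    _ ≤ (∑' p, x p) ^ (2⁻¹ : ℝ) * (∑' p, y p) ^ (2⁻¹ : ℝ) :=
        ENNReal.tsum_rpow_mul_rpow_le x y (by norm_num) (by norm_num) (by norm_num)
    _ ≤ (V * A) ^ (2⁻¹ : ℝ) * (K * A) ^ (2⁻¹ : ℝ) := by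
        rw [ENNReal.tsum_prod', ENNReal.tsum_prod']
        gcongr
        · exact tsum_tsum_ite_mul_le s (θ / 2) a v
        · exact tsum_tsum_ite_kernel_mul_le hs0 hs a
    _ = K ^ (2⁻¹ : ℝ) * V ^ (2⁻¹ : ℝ) * (A ^ (2⁻¹ : ℝ) * A ^ (2⁻¹ : ℝ)) := by
        rw [ENNReal.mul_rpow_of_nonneg _ _ (by norm_num),
          ENNReal.mul_rpow_of_nonneg _ _ (by norm_num)]
        ring
    _ = _ := by rw [← ENNReal.rpow_add_of_nonneg _ _ (by norm_num) (by norm_num)]; norm_num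

theorem tsum_mul_autocorrelation_le (a v : ℤ → ℝ≥0∞) (ha : ∀ n < 0, a n = 0)
    (hv : ∀ n, v (-n) = v n) :
    ∑' n, v n * ∑' k, a k * a (k - n)
      ≤ 2 * ENNReal.ofReal (schurConst s) ^ (2⁻¹ : ℝ) * ennHnormSq (-s) v ^ (2⁻¹ : ℝ)
        * ennHnormSq ((s + 1 / 2) / 2) a := by
  rw [tsum_mul_tsum_mul_sub_eq, mul_assoc 2, mul_assoc 2]
  refine (tsum_tsum_le_two_mul_tsum_tsum_ite a v ha hv).trans ?_
  gcongr
  exact tsum_tsum_ite_le hs0 hs a v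

end Autocorrelation

theorem norm_tsum_mul_conj_autocorrelation_le {s : ℝ} (hs0 : 0 ≤ s) (hs : s < 1 / 2)
    {u f : ℤ → ℂ} (hu : ∀ n, u (-n) = conj (u n)) (hf : ∀ n < 0, f n = 0)
    (huH : memH (-s) u) (hfH : memH (1 / 2) f) :
    ‖∑' n, u n * conj (∑' k, f k * conj (f (k - n)))‖
      ≤ 2 * √(schurConst s) * hnorm (-s) u
        * (hnormSq (1 / 2) f ^ (s + 1 / 2) * hnormSq 0 f ^ (1 / 2 - s)) := by
  set a : ℤ → ℝ≥0∞ := fun n => ‖f n‖ₑ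
  set v : ℤ → ℝ≥0∞ := fun n => ‖u n‖ₑ
  have henorm : ‖∑' n, u n * conj (∑' k, f k * conj (f (k - n)))‖ₑ
      ≤ ∑' n, v n * ∑' k, a k * a (k - n) := by
    refine enorm_tsum_le_tsum_enorm.trans (ENNReal.tsum_le_tsum fun n => ?_)
    rw [enorm_mul, RCLike.enorm_conj]
    gcongr
    refine enorm_tsum_le_tsum_enorm.trans (le_of_eq (tsum_congr fun k => ?_))
    simp [a]
  have hbilin := tsum_mul_autocorrelation_le hs0 hs a v (fun n hn => by simp [a, hf n hn])
    (fun n => by simp [v, hu])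
  have hinterp := ennHnormSq_le_rpow_mul_rpow (θ := s + 1 / 2) (by linarith) (by linarith) a
  rw [show 1 - (s + 1 / 2) = 1 / 2 - s by ring] at hinterp
  rw [ennHnormSq_enorm huH] at hbilin
  rw [ennHnormSq_enorm hfH, ennHnormSq_enorm (memH_anti (t := 0) (by norm_num) hfH)] at hinterp
  have hK := (schurConst_pos hs).le
  have hA := hnormSq_nonneg (1 / 2) f
  have hP := hnormSq_nonneg 0 f
  have hr := hnorm_nonneg (-s) u
  rw [← ENNReal.ofReal_le_ofReal_iff (by positivity), ofReal_norm]
  calc _ ≤ _ := henorm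
    _ ≤ _ := hbilin
    _ ≤ 2 * ENNReal.ofReal (schurConst s) ^ (2⁻¹ : ℝ) * ENNReal.ofReal (hnormSq (-s) u) ^ (2⁻¹ : ℝ)
          * (ENNReal.ofReal (hnormSq (1 / 2) f) ^ (s + 1 / 2)
            * ENNReal.ofReal (hnormSq 0 f) ^ (1 / 2 - s)) := by gcongr
    _ = _ := by
      rw [hnorm, ENNReal.ofReal_mul (by positivity), ENNReal.ofReal_mul (by positivity),
        ENNReal.ofReal_mul (by positivity), ENNReal.ofReal_mul (by positivity),
        ENNReal.ofReal_ofNat, ENNReal.ofReal_sqrt hK, ENNReal.ofReal_sqrt (hnormSq_nonneg _ _),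
        ENNReal.ofReal_rpow_of_nonneg hA (by linarith),
        ENNReal.ofReal_rpow_of_nonneg hP (by linarith)]
lemma mul_rpow_mul_rpow_le_half_add {θ M A P : ℝ} (hθ0 : 0 < θ) (hθ1 : θ < 1) (hM : 0 ≤ M)
    (hA : 0 ≤ A) (hP : 0 ≤ P) :
    M * (A ^ θ * P ^ (1 - θ)) ≤ A / 2 + 2 ^ (θ / (1 - θ)) * M ^ (1 / (1 - θ)) * P := by
  have hθ : 0 < 1 - θ := by linarith
  set c := 2 ^ (θ / (1 - θ)) * M ^ (1 / (1 - θ))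
  have hc : c ^ (1 - θ) = 2 ^ θ * M := by
    rw [Real.mul_rpow (by positivity) (by positivity), ← Real.rpow_mul (by norm_num),
      ← Real.rpow_mul hM, div_mul_cancel₀ _ hθ.ne', one_div_mul_cancel hθ.ne', Real.rpow_one]
  have hsplit : M * (A ^ θ * P ^ (1 - θ)) = (A / 2) ^ θ * (c * P) ^ (1 - θ) := by
    rw [Real.div_rpow hA (by norm_num), Real.mul_rpow (by positivity) hP, hc]
    field_simp
  calc M * (A ^ θ * P ^ (1 - θ)) = (A / 2) ^ θ * (c * P) ^ (1 - θ) := hsplit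
    _ ≤ θ * (A / 2) + (1 - θ) * (c * P) :=
        Real.geom_mean_le_arith_mean2_weighted hθ0.le hθ.le (by positivity) (by positivity)
          (by ring)
    _ ≤ A / 2 + c * P := by
        have hcP : 0 ≤ c * P := by positivity
        nlinarith [mul_nonneg hθ.le hA, mul_nonneg hθ0.le hcP]

lemma rpow_mul_rpow_le_etaS {s c r : ℝ} (hs0 : -(1 / 2) ≤ s) (hs : s < 1 / 2) (hc : 0 ≤ c)
    (hr : 0 ≤ r) :
    2 ^ ((1 + 2 * s) / (1 - 2 * s)) * (c * r) ^ (2 / (1 - 2 * s))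
      ≤ etaS s (c ^ (1 / (1 - 2 * s))) r := by
  have h2s : 0 < 1 - 2 * s := by linarith
  set E := (1 + 2 * s) / (1 - 2 * s) with hE_def
  have hE0 : 0 ≤ E := div_nonneg (by linarith) h2s.le
  have hE : 2 / (1 - 2 * s) = 1 + E := by rw [hE_def]; field_simp; ring
  have hcE : (c ^ (1 / (1 - 2 * s))) ^ 2 = c ^ (1 + E) := by
    rw [← Real.rpow_natCast, ← Real.rpow_mul hc, ← hE]; congr 1; field_simp; norm_num
  have hrE : r ^ E ≤ (1 + r) ^ E := Real.rpow_le_rpow hr (by linarith) hE0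
  rw [etaS, hcE, hE, Real.mul_rpow hc hr, Real.rpow_add' hr (by linarith), Real.rpow_one,
    Real.mul_rpow (by norm_num) (by positivity)]
  calc 2 ^ E * (c ^ (1 + E) * (r * r ^ E)) = c ^ (1 + E) * r * (2 ^ E * r ^ E) := by ring
    _ ≤ c ^ (1 + E) * r * (2 ^ E * (1 + r) ^ E) := by gcongr
    _ = _ := by ring

-- Chosen so that Young's inequality in `mul_rpow_mul_rpow_le_half_add` produces `etaS`.
noncomputable def toeplitzConst (s : ℝ) : ℝ := (2 * √(schurConst s)) ^ (1 / (1 - 2 * s))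

lemma mul_rpow_mul_rpow_le_half_add_etaS {s r A P : ℝ} (hs0 : 0 ≤ s) (hs : s < 1 / 2)
    (hr : 0 ≤ r) (hA : 0 ≤ A) (hP : 0 ≤ P) :
    2 * √(schurConst s) * r * (A ^ (s + 1 / 2) * P ^ (1 / 2 - s))
      ≤ A / 2 + etaS s (toeplitzConst s) r * P := by
  have h := mul_rpow_mul_rpow_le_half_add (θ := s + 1 / 2) (M := 2 * √(schurConst s) * r)
    (by linarith) (by linarith) (by positivity) hA hP
  have h2s : 0 < 1 - 2 * s := by linarith
  have hexp₁ : (s + 1 / 2) / (1 - (s + 1 / 2)) = (1 + 2 * s) / (1 - 2 * s) := by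
    field_simp; ring
  have hexp₂ : 1 / (1 - (s + 1 / 2)) = 2 / (1 - 2 * s) := by field_simp; ring
  rw [show 1 / 2 - s = 1 - (s + 1 / 2) by ring]
  refine h.trans ?_
  rw [hexp₁, hexp₂]
  gcongr
  exact rpow_mul_rpow_le_etaS (by linarith) hs (by positivity) hr

lemma toeplitzConst_pos {s : ℝ} (hs : s < 1 / 2) : 0 < toeplitzConst s :=
  Real.rpow_pos_of_pos (by have := Real.sqrt_pos.2 (schurConst_pos hs); positivity) _

lemma etaS_nonneg {s C r : ℝ} (hr : 0 ≤ r) : 0 ≤ etaS s C r :=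
  mul_nonneg (mul_nonneg hr (Real.rpow_nonneg (by linarith) _)) (sq_nonneg C)

theorem norm_tsum_mul_conj_autocorrelation_le_half_add {s : ℝ} (hs0 : 0 ≤ s) (hs : s < 1 / 2)
    {u f : ℤ → ℂ} (hu : ∀ n, u (-n) = conj (u n)) (hf : ∀ n < 0, f n = 0)
    (huH : memH (-s) u) (hfH : memH (1 / 2) f) :
    ‖∑' n, u n * conj (∑' k, f k * conj (f (k - n)))‖
      ≤ hnormSq (1 / 2) f / 2 + etaS s (toeplitzConst s) (hnorm (-s) u) * hnormSq 0 f :=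
  (norm_tsum_mul_conj_autocorrelation_le hs0 hs hu hf huH hfH).trans
    (mul_rpow_mul_rpow_le_half_add_etaS hs0 hs (hnorm_nonneg _ _) (hnormSq_nonneg _ _)
      (hnormSq_nonneg _ _))

/-- For u ∈ H^{-s}(𝕋, ℝ) of mean zero, 0 ≤ s < 1/2, the quadratic form
Q_u⁺(f,f) = ⟨-i∂_x f|f⟩ - ⟨u | f·conj f⟩ + (1+η_s(‖u‖_{-s}))⟨f|f⟩ on H^{1/2}_+
(expressed via Fourier coefficients) is real, positive, and satisfies
(1/2)‖f‖_{1/2}² ≤ Q_u⁺(f,f) ≤ (3 + 2η_s(‖u‖_{-s}))‖f‖_{1/2}². -/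
theorem stmt3 (s : ℝ) (hs0 : 0 ≤ s) (hs : s < 1/2) :
    ∃ C : ℝ, 0 < C ∧ ∀ u : ℤ → ℂ,
      (∀ n : ℤ, u (-n) = conj (u n)) → u 0 = 0 → memH (-s) u →
      ∀ f : ℤ → ℂ, (∀ n : ℤ, n < 0 → f n = 0) → memH (1/2) f →
      ∀ η : ℝ, η = etaS s C (hnorm (-s) u) →
      ∀ Q : ℂ, Q = (∑' n : ℤ, (n : ℂ) * (f n * conj (f n)))
          - (∑' n : ℤ, u n * conj (∑' k : ℤ, f k * conj (f (k - n))))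
          + ((1 + η : ℝ) : ℂ) * ∑' n : ℤ, f n * conj (f n) →
      Q.im = 0 ∧ (1/2) * hnorm (1/2) f ^ 2 ≤ Q.re ∧ Q.re ≤ (3 + 2*η) * hnorm (1/2) f ^ 2 := by
  refine ⟨toeplitzConst s, toeplitzConst_pos hs, ?_⟩
  intro u hu _ huH f hf hfH η hη Q hQ
  rw [tsum_intCast_mul_mul_conj_self, tsum_mul_conj_self] at hQ
  set A := hnormSq (1 / 2) f
  set P := hnormSq 0 f
  set D := ∑' n : ℤ, (n : ℝ) * ‖f n‖ ^ 2
  set T := ∑' n : ℤ, u n * conj (∑' k : ℤ, f k * conj (f (k - n)))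
  have hη0 : 0 ≤ η := hη ▸ etaS_nonneg (hnorm_nonneg _ _)
  have hPA : P ≤ A := hnormSq_mono (by norm_num) hfH
  have hDA : D ≤ A := tsum_intCast_mul_norm_sq_le_hnormSq hfH
  have hADP : A ≤ D + P := hnormSq_le_tsum_intCast_mul_norm_sq_add hfH hf
  have hT : ‖T‖ ≤ A / 2 + η * P :=
    hη ▸ norm_tsum_mul_conj_autocorrelation_le_half_add hs0 hs hu hf huH hfH
  have hTre := abs_le.1 ((Complex.abs_re_le_norm T).trans hT)
  have hTim : T.im = 0 := Complex.conj_eq_iff_im.1 (conj_tsum_mul_conj_autocorrelation hu f)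
  have hQre : Q.re = D - T.re + (1 + η) * P := by simp [hQ]
  have hA : hnorm (1 / 2) f ^ 2 = A := Real.sq_sqrt (hnormSq_nonneg _ _)
  refine ⟨by simp [hQ, hTim], ?_, ?_⟩
  · rw [hQre, hA]; nlinarith
  · rw [hQre, hA]; nlinarith [mul_le_mul_of_nonneg_left hPA hη0]
end

section
/- Let (λ_n)_{n≥0} be a strictly increasing real sequence with λ_p - λ_{p-1} = 1 + γ_p where γ_p ≥ 0 and Σ_p γ_p < ∞, and λ_0 ≤ 0 ≤ λ_n for all n large. Define κ_n = (λ_n - λ_0)^{-1} · Π_{p≥1, p≠n} (1 - γ_p/(λ_p - λ_n)) for n ≥ 1. Then each factor satisfies 1 - γ_p/(λ_p - λ_n) = (λ_{p-1} + 1 - λ_n)/(λ_p - λ_n) > 0, the infinite product converges absolutely, and 0 < κ_n ≤ e^{-λ_0}/n for every n ≥ 1, using λ_n - λ_0 = n + Σ_{k=1}^n γ_k ≥ n. -/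
/-!
Every factor `1 - γ p / (λ p - λ n)` is of the form `1 + γ p / d` or `(1 + γ p / d)⁻¹` with
`d ≥ 1`: for `p < n` take `d = λ n - λ p ≥ n - p`, for `p > n` take `d = λ (p - 1) + 1 - λ n`.
Hence it is positive with `|log| ≤ γ p`, so the logarithms are summable, the product equals the
exponential of their sum, and that sum is at most `Σ γ = -λ 0`. The prefactor is handled by
`λ n - λ 0 = n + Σ_{k ≤ n} γ k ≥ n`.
-/

open Real Finset

theorem abs_log_one_add_div_le {g d : ℝ} (hg : 0 ≤ g) (hd : 1 ≤ d) : |log (1 + g / d)| ≤ g := by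
  have hgd : 0 ≤ g / d := div_nonneg hg (by linarith)
  rw [abs_of_nonneg (log_nonneg (by linarith))]
  linarith [log_le_sub_one_of_pos (by linarith : 0 < 1 + g / d), div_le_self hg hd]

theorem exists_hasProd_exp_le_tsum {ι : Type*} {f g : ι → ℝ} (hf : ∀ i, 0 < f i)
    (hg : Summable g) (hfg : ∀ i, |log (f i)| ≤ g i) : ∃ s ≤ ∑' i, g i, HasProd f (exp s) := by
  have hlog : Summable fun i => log (f i) := hg.of_norm_bounded hfg
  exact ⟨_, hlog.tsum_le_tsum (fun i => (le_abs_self _).trans (hfg i)) hg,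
    hasProd_of_hasSum_log hf hlog.hasSum⟩

section GapSequence

variable {lam γ : ℕ → ℝ}

theorem nonneg_of_forall_succ_nonneg (hγ : ∀ p : ℕ, 0 ≤ γ (p + 1)) {k : ℕ} (hk : 1 ≤ k) :
    0 ≤ γ k := by
  obtain ⟨p, rfl⟩ := Nat.exists_eq_add_of_le' hk
  exact hγ p

theorem strictMono_of_gap (hgap : ∀ p : ℕ, lam (p + 1) - lam p = 1 + γ (p + 1))
    (hγ : ∀ p : ℕ, 0 ≤ γ (p + 1)) : StrictMono lam :=
  strictMono_nat_of_lt_succ fun p => by linarith [hgap p, hγ p]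

theorem sub_eq_add_sum_of_gap (hgap : ∀ p : ℕ, lam (p + 1) - lam p = 1 + γ (p + 1))
    (p d : ℕ) : lam (p + d) - lam p = d + ∑ k ∈ Ioc p (p + d), γ k := by
  induction d with
  | zero => simp
  | succ d ih =>
    rw [← add_assoc, sum_Ioc_succ_top (Nat.le_add_right p d)]
    push_cast
    linarith [hgap (p + d)]

theorem le_sub_of_gap (hgap : ∀ p : ℕ, lam (p + 1) - lam p = 1 + γ (p + 1))
    (hγ : ∀ p : ℕ, 0 ≤ γ (p + 1)) {p q : ℕ} (hpq : p ≤ q) : (q : ℝ) - p ≤ lam q - lam p := by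
  obtain ⟨d, rfl⟩ := Nat.exists_eq_add_of_le hpq
  have hsum : 0 ≤ ∑ k ∈ Ioc p (p + d), γ k :=
    sum_nonneg fun k hk => nonneg_of_forall_succ_nonneg hγ (by linarith [(mem_Ioc.mp hk).1])
  rw [sub_eq_add_sum_of_gap hgap]
  push_cast
  linarith

theorem sub_pred_eq_of_gap (hgap : ∀ p : ℕ, lam (p + 1) - lam p = 1 + γ (p + 1)) {p : ℕ}
    (hp : 1 ≤ p) : lam p - lam (p - 1) = 1 + γ p := by
  obtain ⟨q, rfl⟩ := Nat.exists_eq_add_of_le' hp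
  simpa using hgap q

noncomputable def gapFactor (lam γ : ℕ → ℝ) (n p : ℕ) : ℝ := 1 - γ p / (lam p - lam n)

theorem gapFactor_eq (hgap : ∀ p : ℕ, lam (p + 1) - lam p = 1 + γ (p + 1)) {n p : ℕ}
    (hp : 1 ≤ p) (hpn : lam p ≠ lam n) :
    gapFactor lam γ n p = (lam (p - 1) + 1 - lam n) / (lam p - lam n) := by
  rw [gapFactor, one_sub_div (sub_ne_zero.2 hpn)]
  congr 1
  linarith [sub_pred_eq_of_gap hgap hp]

theorem exists_gapFactor_eq_one_add_div (hgap : ∀ p : ℕ, lam (p + 1) - lam p = 1 + γ (p + 1))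
    (hγ : ∀ p : ℕ, 0 ≤ γ (p + 1)) {n p : ℕ} (hp : 1 ≤ p) (hpn : p ≠ n) :
    ∃ d : ℝ, 1 ≤ d ∧
      (gapFactor lam γ n p = 1 + γ p / d ∨ gapFactor lam γ n p = (1 + γ p / d)⁻¹) := by
  rcases hpn.lt_or_gt with hlt | hgt
  · have hd : (p : ℝ) + 1 ≤ n := by exact_mod_cast hlt
    refine ⟨lam n - lam p, ?_, Or.inl ?_⟩
    · linarith [le_sub_of_gap hgap hγ hlt.le]
    · rw [gapFactor, ← neg_sub (lam n), div_neg, sub_neg_eq_add]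
  · have hd : (n : ℝ) ≤ ((p - 1 : ℕ) : ℝ) := by exact_mod_cast Nat.le_sub_one_of_lt hgt
    have hd1 : 1 ≤ lam (p - 1) + 1 - lam n := by
      linarith [le_sub_of_gap hgap hγ (Nat.le_sub_one_of_lt hgt)]
    refine ⟨lam (p - 1) + 1 - lam n, hd1, Or.inr ?_⟩
    rw [gapFactor_eq hgap hp ((strictMono_of_gap hgap hγ).injective.ne hgt.ne')]
    have hlam : lam p - lam n = lam (p - 1) + 1 - lam n + γ p := by
      linarith [sub_pred_eq_of_gap hgap hp]
    rw [hlam]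
    field_simp

theorem gapFactor_pos (hgap : ∀ p : ℕ, lam (p + 1) - lam p = 1 + γ (p + 1))
    (hγ : ∀ p : ℕ, 0 ≤ γ (p + 1)) {n p : ℕ} (hp : 1 ≤ p) (hpn : p ≠ n) :
    0 < gapFactor lam γ n p := by
  have hγp := nonneg_of_forall_succ_nonneg hγ hp
  obtain ⟨d, hd, h | h⟩ := exists_gapFactor_eq_one_add_div hgap hγ hp hpn <;>
  · have : 0 < d := by linarith
    rw [h]
    positivity

theorem abs_log_gapFactor_le (hgap : ∀ p : ℕ, lam (p + 1) - lam p = 1 + γ (p + 1))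
    (hγ : ∀ p : ℕ, 0 ≤ γ (p + 1)) {n p : ℕ} (hp : 1 ≤ p) (hpn : p ≠ n) :
    |log (gapFactor lam γ n p)| ≤ γ p := by
  have hγp := nonneg_of_forall_succ_nonneg hγ hp
  obtain ⟨d, hd, h | h⟩ := exists_gapFactor_eq_one_add_div hgap hγ hp hpn
  · rw [h]
    exact abs_log_one_add_div_le hγp hd
  · rw [h, log_inv, abs_neg]
    exact abs_log_one_add_div_le hγp hd

theorem subtype_sub_one_injective {P : ℕ → Prop} (hP : ∀ p, P p → 1 ≤ p) :
    Function.Injective fun p : {p // P p} => (p : ℕ) - 1 := fun a b hab =>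
  Subtype.ext (by have := hP a a.2; have := hP b b.2; simp only at hab; omega)

theorem summable_subtype_of_one_le (hsum : Summable fun p : ℕ => γ (p + 1)) {P : ℕ → Prop}
    (hP : ∀ p, P p → 1 ≤ p) : Summable fun p : {p // P p} => γ p := by
  refine (hsum.comp_injective (subtype_sub_one_injective hP)).congr fun p => ?_
  simp [Nat.sub_add_cancel (hP p p.2)]

theorem tsum_subtype_le_of_one_le (hγ : ∀ p : ℕ, 0 ≤ γ (p + 1))
    (hsum : Summable fun p : ℕ => γ (p + 1)) {P : ℕ → Prop} (hP : ∀ p, P p → 1 ≤ p) :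
    ∑' p : {p // P p}, γ p ≤ ∑' k, γ (k + 1) :=
  (summable_subtype_of_one_le hsum hP).tsum_le_tsum_of_inj _ (subtype_sub_one_injective hP)
    (fun k _ => hγ k) (fun p => by simp [Nat.sub_add_cancel (hP p p.2)]) hsum

end GapSequence

theorem stmt5_general (lam γ : ℕ → ℝ)
    (hgap : ∀ p : ℕ, lam (p + 1) - lam p = 1 + γ (p + 1))
    (hγpos : ∀ p : ℕ, 0 ≤ γ (p + 1))
    (hsum : Summable fun p : ℕ => γ (p + 1))
    (hlam : ∀ n : ℕ, lam n = n - ∑' k : ℕ, γ (n + 1 + k)) :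
    ∀ n : ℕ, 1 ≤ n →
      (∀ p : ℕ, 1 ≤ p → p ≠ n →
        1 - γ p / (lam p - lam n) = (lam (p - 1) + 1 - lam n) / (lam p - lam n) ∧
        0 < 1 - γ p / (lam p - lam n)) ∧
      Multipliable (fun p : {p : ℕ // 1 ≤ p ∧ p ≠ n} => 1 - γ (p : ℕ) / (lam (p : ℕ) - lam n)) ∧
      (lam n - lam 0 = n + ∑ k ∈ Finset.Icc 1 n, γ k ∧ (n : ℝ) ≤ lam n - lam 0) ∧
      (0 < (lam n - lam 0)⁻¹ *
          ∏' p : {p : ℕ // 1 ≤ p ∧ p ≠ n}, (1 - γ (p : ℕ) / (lam (p : ℕ) - lam n)) ∧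
        (lam n - lam 0)⁻¹ *
          ∏' p : {p : ℕ // 1 ≤ p ∧ p ≠ n}, (1 - γ (p : ℕ) / (lam (p : ℕ) - lam n))
          ≤ Real.exp (-lam 0) / n) := by
  intro n hn
  have hneg_lam_zero : -lam 0 = ∑' k : ℕ, γ (k + 1) := by
    rw [hlam 0]
    simp [add_comm]
  have hP : ∀ p : ℕ, 1 ≤ p ∧ p ≠ n → 1 ≤ p := fun _ hp => hp.1
  obtain ⟨s, hs, hprod⟩ := exists_hasProd_exp_le_tsum
    (f := fun p : {p : ℕ // 1 ≤ p ∧ p ≠ n} => gapFactor lam γ n p)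
    (fun p => gapFactor_pos hgap hγpos p.2.1 p.2.2) (summable_subtype_of_one_le hsum hP)
    (fun p => abs_log_gapFactor_le hgap hγpos p.2.1 p.2.2)
  have hs0 : s ≤ -lam 0 := hneg_lam_zero ▸ hs.trans (tsum_subtype_le_of_one_le hγpos hsum hP)
  have hdist : lam n - lam 0 = n + ∑ k ∈ Finset.Icc 1 n, γ k := by
    rw [show Icc 1 n = Ioc 0 n from Icc_add_one_left_eq_Ioc 0 n]
    simpa using sub_eq_add_sum_of_gap hgap 0 n
  have hn_le : (n : ℝ) ≤ lam n - lam 0 := by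
    simpa using le_sub_of_gap hgap hγpos (Nat.zero_le n)
  have hn0 : (0 : ℝ) < n := by exact_mod_cast hn
  have hκ : ∏' p : {p : ℕ // 1 ≤ p ∧ p ≠ n}, (1 - γ (p : ℕ) / (lam (p : ℕ) - lam n)) = exp s :=
    hprod.tprod_eq
  refine ⟨fun p hp hpn => ⟨gapFactor_eq hgap hp ((strictMono_of_gap hgap hγpos).injective.ne hpn),
    gapFactor_pos hgap hγpos hp hpn⟩, hprod.multipliable, ⟨hdist, hn_le⟩, ?_, ?_⟩ <;> rw [hκ]
  · exact mul_pos (inv_pos.2 (hn0.trans_le hn_le)) (exp_pos s)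
  · calc (lam n - lam 0)⁻¹ * exp s ≤ (n : ℝ)⁻¹ * exp (-lam 0) := by gcongr
      _ = exp (-lam 0) / n := inv_mul_eq_div _ _

/-- Let (λ_n)_{n≥0} be strictly increasing with λ_p - λ_{p-1} = 1 + γ_p, γ_p ≥ 0 summable,
λ_n = n - Σ_{k>n} γ_k, λ_0 ≤ 0 and 0 ≤ λ_n for all large n. With
κ_n = (λ_n - λ_0)⁻¹ Π_{p≥1, p≠n} (1 - γ_p/(λ_p - λ_n)), each factor equals
(λ_{p-1} + 1 - λ_n)/(λ_p - λ_n) > 0, the infinite product converges, λ_n - λ_0 = n + Σ_{k=1}^n γ_k ≥ n,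
and 0 < κ_n ≤ e^{-λ_0}/n for every n ≥ 1. -/
theorem stmt5 (lam γ : ℕ → ℝ)
    (hmono : StrictMono lam)
    (hgap : ∀ p : ℕ, lam (p + 1) - lam p = 1 + γ (p + 1))
    (hγpos : ∀ p : ℕ, 0 ≤ γ (p + 1))
    (hsum : Summable fun p : ℕ => γ (p + 1))
    (hlam : ∀ n : ℕ, lam n = n - ∑' k : ℕ, γ (n + 1 + k))
    (hlam0 : lam 0 ≤ 0) (hposlarge : ∃ N : ℕ, ∀ n ≥ N, 0 ≤ lam n) :
    ∀ n : ℕ, 1 ≤ n →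
      (∀ p : ℕ, 1 ≤ p → p ≠ n →
        1 - γ p / (lam p - lam n) = (lam (p - 1) + 1 - lam n) / (lam p - lam n) ∧
        0 < 1 - γ p / (lam p - lam n)) ∧
      Multipliable (fun p : {p : ℕ // 1 ≤ p ∧ p ≠ n} => 1 - γ (p : ℕ) / (lam (p : ℕ) - lam n)) ∧
      (lam n - lam 0 = n + ∑ k ∈ Finset.Icc 1 n, γ k ∧ (n : ℝ) ≤ lam n - lam 0) ∧
      (0 < (lam n - lam 0)⁻¹ *
          ∏' p : {p : ℕ // 1 ≤ p ∧ p ≠ n}, (1 - γ (p : ℕ) / (lam (p : ℕ) - lam n)) ∧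
        (lam n - lam 0)⁻¹ *
          ∏' p : {p : ℕ // 1 ≤ p ∧ p ≠ n}, (1 - γ (p : ℕ) / (lam (p : ℕ) - lam n))
          ≤ Real.exp (-lam 0) / n) :=
  stmt5_general lam γ hgap hγpos hsum hlam
end

section
/- For 0 < ε < q < 1, define F(μ, ε, q) = εq ∫₀^q (t^ε/(q-t)^ε) · (q^μ(1-q²)^ε - t^μ(1-qt)^ε)/(t(q-t)) dt for μ > 0. If F(μ₀, ε, q) = 0 for some μ₀ > 0, then ∂F/∂μ(μ₀, ε, q) = εq ∫₀^q (t^ε/(q-t)^ε) · (t^μ₀(1-qt)^ε/(t(q-t))) · log(q/t) dt > 0. Consequently, μ ↦ F(μ, ε, q) has at most one zero in (0, ∞). -/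
open scoped BigOperators

/-- F(μ, ε, q) = εq ∫₀^q (t^ε/(q-t)^ε)·(q^μ(1-q²)^ε - t^μ(1-qt)^ε)/(t(q-t)) dt. -/
noncomputable def Falt (μ ε q : ℝ) : ℝ :=
  ε * q * ∫ t in (0:ℝ)..q,
    (t ^ ε / (q - t) ^ ε) * ((q ^ μ * (1 - q ^ 2) ^ ε - t ^ μ * (1 - q * t) ^ ε) / (t * (q - t)))

/-!
With `k(t) = t^ε (q-t)^(-ε) / (t (q-t))`, `A = (1-q²)^ε` and `B(t) = (1-qt)^ε` we have
`F(μ) = εq ∫₀^q k (q^μ A - t^μ B) dt`. The numerator and its `μ`-derivative vanish linearly at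
`t = q`, uniformly for `μ` in compact subsets of `(0, ∞)`, so both integrands are dominated by
multiples of the integrable `t^(ε-1) (q-t)^(-ε)` and we may differentiate under the integral sign.
Since `∂_μ (q^μ A - t^μ B) = log q · (q^μ A - t^μ B) + t^μ B log (q/t)`, this gives
`F' = log q · F + εq ∫₀^q k t^μ B log (q/t) dt`, whose first term vanishes at a zero of `F`.

For uniqueness, `q^(-μ) F(μ) = εq ∫₀^q k (A - (t/q)^μ B) dt` is strictly increasing in `μ`.
-/

open Real Set MeasureTheory

lemma one_sub_rpow_le_mul {x μ : ℝ} (hx0 : 0 ≤ x) (hx1 : x ≤ 1) (hμ : 0 ≤ μ) :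
    1 - x ^ μ ≤ (1 + μ) * (1 - x) := by
  have hμx : 0 ≤ μ * (1 - x) := mul_nonneg hμ (sub_nonneg.2 hx1)
  rcases le_total μ 1 with hμ1 | hμ1
  · linarith [self_le_rpow_of_le_one hx0 hx1 hμ1]
  · have bernoulli := one_add_mul_self_le_rpow_one_add (s := x - 1) (by linarith) hμ1
    rw [add_sub_cancel] at bernoulli
    linarith

lemma rpow_sub_rpow_le_div_mul {x y μ : ℝ} (hy : 0 ≤ y) (hyx : y ≤ x) (hx1 : x ≤ 1)
    (hμ : 0 ≤ μ) : x ^ μ - y ^ μ ≤ (1 + μ) / x * (x - y) := by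
  obtain rfl | hx := (hy.trans hyx).eq_or_lt
  · obtain rfl := le_antisymm hyx hy
    simp
  have hyx' : y / x ≤ 1 := (div_le_one hx).2 hyx
  have hyμ : y ^ μ = x ^ μ * (y / x) ^ μ := by
    rw [div_rpow hy hx.le]
    field_simp [(rpow_pos_of_pos hx μ).ne']
  calc x ^ μ - y ^ μ = x ^ μ * (1 - (y / x) ^ μ) := by rw [hyμ]; ring
    _ ≤ 1 * ((1 + μ) * (1 - y / x)) :=
        mul_le_mul (rpow_le_one hx.le hx1 hμ) (one_sub_rpow_le_mul (by positivity) hyx' hμ)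
          (sub_nonneg.2 (rpow_le_one (by positivity) hyx' hμ)) zero_le_one
    _ = (1 + μ) / x * (x - y) := by field_simp

lemma rpow_mul_log_div_le {t q μ : ℝ} (ht : 0 < t) (hq : 0 < q) (hμ : 0 < μ) :
    t ^ μ * log (q / t) ≤ (q ^ μ - t ^ μ) / μ := by
  have hlog := log_le_sub_one_of_pos (rpow_pos_of_pos (div_pos hq ht) μ)
  rw [log_rpow (div_pos hq ht), div_rpow hq.le ht.le] at hlog
  have htμ := rpow_pos_of_pos ht μ
  rw [le_div_iff₀ hμ]
  calc t ^ μ * log (q / t) * μ = t ^ μ * (μ * log (q / t)) := by ring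
    _ ≤ t ^ μ * (q ^ μ / t ^ μ - 1) := mul_le_mul_of_nonneg_left hlog htμ.le
    _ = q ^ μ - t ^ μ := by field_simp

lemma abs_rpow_mul_sub_rpow_mul_le {ε q t μ : ℝ} (hε : 0 ≤ ε) (hq1 : q < 1) (ht : 0 < t)
    (htq : t ≤ q) (hμ : 0 ≤ μ) :
    |q ^ μ * (1 - q ^ 2) ^ ε - t ^ μ * (1 - q * t) ^ ε|
      ≤ ((1 + μ) / q + (1 + ε) / (1 - q)) * (q - t) := by
  have hq : 0 < q := ht.trans_le htq
  have hq2 : 0 ≤ 1 - q ^ 2 := by nlinarith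
  have hqt : 1 - q ^ 2 ≤ 1 - q * t := by nlinarith
  have hB0 : 0 ≤ (1 - q * t) ^ ε := rpow_nonneg (by nlinarith) ε
  have hB1 : (1 - q * t) ^ ε ≤ 1 := rpow_le_one (by nlinarith) (by nlinarith) hε
  have hpow0 : 0 ≤ q ^ μ - t ^ μ := sub_nonneg.2 (rpow_le_rpow ht.le htq hμ)
  have hpow : q ^ μ - t ^ μ ≤ (1 + μ) / q * (q - t) :=
    rpow_sub_rpow_le_div_mul ht.le htq hq1.le hμ
  have hB0' : 0 ≤ (1 - q * t) ^ ε - (1 - q ^ 2) ^ ε := sub_nonneg.2 (rpow_le_rpow hq2 hqt hε)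
  have hB : (1 - q * t) ^ ε - (1 - q ^ 2) ^ ε ≤ (1 + ε) / (1 - q) * (q - t) := by
    have hqt' : q / (1 - q * t) ≤ 1 / (1 - q) := by
      rw [div_le_div_iff₀ (by nlinarith) (by linarith)]
      nlinarith
    calc (1 - q * t) ^ ε - (1 - q ^ 2) ^ ε
        ≤ (1 + ε) / (1 - q * t) * ((1 - q * t) - (1 - q ^ 2)) :=
          rpow_sub_rpow_le_div_mul hq2 hqt (by nlinarith) hε
      _ = (1 + ε) * (q / (1 - q * t)) * (q - t) := by ring
      _ ≤ (1 + ε) * (1 / (1 - q)) * (q - t) := by gcongr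
      _ = (1 + ε) / (1 - q) * (q - t) := by ring
  have hK₁ : 0 ≤ (1 + μ) / q * (q - t) := by have := sub_nonneg.2 htq; positivity
  have hK₂ : 0 ≤ (1 + ε) / (1 - q) * (q - t) :=
    mul_nonneg (div_nonneg (by linarith) (by linarith)) (by linarith)
  rw [show q ^ μ * (1 - q ^ 2) ^ ε - t ^ μ * (1 - q * t) ^ ε
      = (q ^ μ - t ^ μ) * (1 - q * t) ^ ε - q ^ μ * ((1 - q * t) ^ ε - (1 - q ^ 2) ^ ε) by ring]
  refine abs_sub_le_of_nonneg_of_le (mul_nonneg hpow0 hB0) ?_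
    (mul_nonneg (rpow_nonneg hq.le μ) hB0') ?_
  · linarith [mul_le_of_le_one_right hpow0 hB1]
  · linarith [mul_le_of_le_one_left hB0' (rpow_le_one hq.le hq1.le hμ)]

lemma abs_rpow_mul_rpow_mul_log_div_le {ε q t μ : ℝ} (hε : 0 ≤ ε) (hq1 : q < 1) (ht : 0 < t)
    (htq : t ≤ q) (hμ : 0 < μ) :
    |t ^ μ * (1 - q * t) ^ ε * log (q / t)| ≤ (1 + μ) / (μ * q) * (q - t) := by
  have hq : 0 < q := ht.trans_le htq
  have hlog : 0 ≤ log (q / t) := log_nonneg ((one_le_div ht).2 htq)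
  have hB0 : 0 ≤ (1 - q * t) ^ ε := rpow_nonneg (by nlinarith) ε
  have hB1 : (1 - q * t) ^ ε ≤ 1 := rpow_le_one (by nlinarith) (by nlinarith) hε
  have htμ : 0 ≤ t ^ μ := rpow_nonneg ht.le μ
  rw [abs_of_nonneg (by positivity)]
  calc t ^ μ * (1 - q * t) ^ ε * log (q / t) ≤ t ^ μ * log (q / t) := by
        rw [mul_right_comm]; exact mul_le_of_le_one_right (by positivity) hB1
    _ ≤ (q ^ μ - t ^ μ) / μ := rpow_mul_log_div_le ht hq hμ
    _ ≤ (1 + μ) / q * (q - t) / μ := by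
        gcongr; exact rpow_sub_rpow_le_div_mul ht.le htq hq1.le hμ.le
    _ = (1 + μ) / (μ * q) * (q - t) := by field_simp

lemma abs_rpow_div_rpow_mul_div_le {ε q t X M : ℝ} (hM : 0 ≤ M) (ht : 0 < t) (htq : t ≤ q)
    (hX : |X| ≤ M * (q - t)) :
    |t ^ ε / (q - t) ^ ε * (X / (t * (q - t)))| ≤ M * (t ^ (ε - 1) * (q - t) ^ (-ε)) := by
  obtain htq | rfl := htq.lt_or_eq
  · have hqt : 0 < q - t := sub_pos.2 htq
    have hP : 0 < t ^ ε / (q - t) ^ ε := by positivity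
    rw [abs_mul, abs_of_pos hP, abs_div, abs_of_pos (mul_pos ht hqt)]
    calc t ^ ε / (q - t) ^ ε * (|X| / (t * (q - t)))
        ≤ t ^ ε / (q - t) ^ ε * (M * (q - t) / (t * (q - t))) := by gcongr
      _ = M * (t ^ (ε - 1) * (q - t) ^ (-ε)) := by
        rw [rpow_sub_one ht.ne', rpow_neg hqt.le]
        field_simp
  · -- at `t = q` the left side is the junk value `_ / 0 = 0`
    simp only [sub_self, mul_zero, div_zero, abs_zero]
    exact mul_nonneg hM (mul_nonneg (rpow_nonneg ht.le _) (rpow_nonneg le_rfl _))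

lemma intervalIntegrable_rpow_mul_sub_rpow {r s q : ℝ} (hr : -1 < r) (hr0 : r ≤ 0)
    (hs : -1 < s) (hs0 : s ≤ 0) (hq : 0 < q) :
    IntervalIntegrable (fun t => t ^ r * (q - t) ^ s) volume 0 q := by
  have hleft : IntervalIntegrable (fun t => t ^ r) volume 0 q :=
    intervalIntegral.intervalIntegrable_rpow' hr
  have hright : IntervalIntegrable (fun t => (q - t) ^ s) volume 0 q := by
    simpa using (intervalIntegral.intervalIntegrable_rpow' hs (a := q) (b := 0)).comp_sub_left q
  refine ((hleft.const_mul ((q / 2) ^ s)).add (hright.const_mul ((q / 2) ^ r))).mono_fun'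
    (by fun_prop) ?_
  rw [uIoc_of_le hq.le]
  refine ae_restrict_of_forall_mem measurableSet_Ioc fun t ⟨ht, htq⟩ => ?_
  have htr : 0 ≤ t ^ r := rpow_nonneg ht.le r
  have hts : 0 ≤ (q - t) ^ s := rpow_nonneg (sub_nonneg.2 htq) s
  show ‖t ^ r * (q - t) ^ s‖ ≤ (q / 2) ^ s * t ^ r + (q / 2) ^ r * (q - t) ^ s
  rw [Real.norm_eq_abs, abs_of_nonneg (mul_nonneg htr hts)]
  -- `t` is at distance at least `q / 2` from one of the two endpoints
  rcases le_total t (q / 2) with hth | hth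
  · have hs' := rpow_le_rpow_of_nonpos (by positivity) (by linarith : q / 2 ≤ q - t) hs0
    nlinarith [mul_nonneg (rpow_nonneg (by positivity : (0:ℝ) ≤ q / 2) r) hts]
  · have hr' := rpow_le_rpow_of_nonpos (by positivity) hth hr0
    nlinarith [mul_nonneg (rpow_nonneg (by positivity : (0:ℝ) ≤ q / 2) s) htr]

lemma IntervalIntegrable.of_abs_le_of_forall_mem_Ioc {f g : ℝ → ℝ} {a b : ℝ} (hab : a ≤ b)
    (hf : Measurable f) (hg : IntervalIntegrable g volume a b) (hfg : ∀ t ∈ Ioc a b, |f t| ≤ g t) :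
    IntervalIntegrable f volume a b :=
  hg.mono_fun' hf.aestronglyMeasurable <| by
    rw [uIoc_of_le hab]
    exact ae_restrict_of_forall_mem measurableSet_Ioc hfg

noncomputable def faltIntegrand (ε q μ t : ℝ) : ℝ :=
  t ^ ε / (q - t) ^ ε * ((q ^ μ * (1 - q ^ 2) ^ ε - t ^ μ * (1 - q * t) ^ ε) / (t * (q - t)))

noncomputable def faltLogIntegrand (ε q μ t : ℝ) : ℝ :=
  t ^ ε / (q - t) ^ ε * (t ^ μ * (1 - q * t) ^ ε / (t * (q - t))) * log (q / t)

lemma Falt_eq_integral_faltIntegrand (μ ε q : ℝ) :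
    Falt μ ε q = ε * q * ∫ t in (0:ℝ)..q, faltIntegrand ε q μ t := rfl

section Integrands

variable {ε q μ t : ℝ}

lemma measurable_faltIntegrand : Measurable (faltIntegrand ε q μ) := by
  unfold faltIntegrand; fun_prop

lemma measurable_faltLogIntegrand : Measurable (faltLogIntegrand ε q μ) := by
  unfold faltLogIntegrand; fun_prop

lemma abs_faltIntegrand_le (hε : 0 ≤ ε) (hq1 : q < 1) (hμ : 0 ≤ μ) (ht : 0 < t) (htq : t ≤ q) :
    |faltIntegrand ε q μ t|
      ≤ ((1 + μ) / q + (1 + ε) / (1 - q)) * (t ^ (ε - 1) * (q - t) ^ (-ε)) := by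
  have hq := ht.trans_le htq
  have hK : 0 ≤ (1 + μ) / q + (1 + ε) / (1 - q) :=
    add_nonneg (by positivity) (div_nonneg (by linarith) (by linarith))
  exact abs_rpow_div_rpow_mul_div_le hK ht htq (abs_rpow_mul_sub_rpow_mul_le hε hq1 ht htq hμ)

lemma abs_faltLogIntegrand_le (hε : 0 ≤ ε) (hq1 : q < 1) (hμ : 0 < μ) (ht : 0 < t)
    (htq : t ≤ q) :
    |faltLogIntegrand ε q μ t| ≤ (1 + μ) / (μ * q) * (t ^ (ε - 1) * (q - t) ^ (-ε)) := by
  have hq := ht.trans_le htq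
  rw [show faltLogIntegrand ε q μ t = t ^ ε / (q - t) ^ ε
      * (t ^ μ * (1 - q * t) ^ ε * log (q / t) / (t * (q - t))) by
    rw [faltLogIntegrand]; ring]
  exact abs_rpow_div_rpow_mul_div_le (by positivity) ht htq
    (abs_rpow_mul_rpow_mul_log_div_le hε hq1 ht htq hμ)

lemma intervalIntegrable_faltIntegrand (hε : 0 < ε) (hε1 : ε < 1) (hq : 0 < q) (hq1 : q < 1)
    (hμ : 0 ≤ μ) : IntervalIntegrable (faltIntegrand ε q μ) volume 0 q :=
  .of_abs_le_of_forall_mem_Ioc hq.le measurable_faltIntegrand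
    ((intervalIntegrable_rpow_mul_sub_rpow (by linarith) (by linarith) (by linarith)
      (by linarith) hq).const_mul _)
    fun _ ht => abs_faltIntegrand_le hε.le hq1 hμ ht.1 ht.2

lemma intervalIntegrable_faltLogIntegrand (hε : 0 < ε) (hε1 : ε < 1) (hq : 0 < q) (hq1 : q < 1)
    (hμ : 0 < μ) : IntervalIntegrable (faltLogIntegrand ε q μ) volume 0 q :=
  .of_abs_le_of_forall_mem_Ioc hq.le measurable_faltLogIntegrand
    ((intervalIntegrable_rpow_mul_sub_rpow (by linarith) (by linarith) (by linarith)
      (by linarith) hq).const_mul _)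
    fun _ ht => abs_faltLogIntegrand_le hε.le hq1 hμ ht.1 ht.2

lemma hasDerivAt_faltIntegrand (hq : 0 < q) (ht : 0 < t) :
    HasDerivAt (fun μ => faltIntegrand ε q μ t)
      (log q * faltIntegrand ε q μ t + faltLogIntegrand ε q μ t) μ := by
  have h := ((((hasStrictDerivAt_const_rpow hq μ).hasDerivAt.mul_const ((1 - q ^ 2) ^ ε)).sub
    ((hasStrictDerivAt_const_rpow ht μ).hasDerivAt.mul_const ((1 - q * t) ^ ε))).div_const
      (t * (q - t))).const_mul (t ^ ε / (q - t) ^ ε)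
  refine h.congr_deriv ?_
  rw [faltIntegrand, faltLogIntegrand, log_div hq.ne' ht.ne']
  ring

lemma faltLogIntegrand_pos (hq1 : q < 1) (ht : 0 < t) (htq : t < q) :
    0 < faltLogIntegrand ε q μ t := by
  have hqt : 0 < q - t := sub_pos.2 htq
  have hB : 0 < 1 - q * t := by nlinarith
  have hlog : 0 < log (q / t) := log_pos ((one_lt_div ht).2 htq)
  unfold faltLogIntegrand
  positivity

lemma rpow_neg_mul_faltIntegrand (hq : 0 < q) (ht : 0 < t) :
    q ^ (-μ) * faltIntegrand ε q μ t
      = t ^ ε / (q - t) ^ ε / (t * (q - t)) * ((1 - q ^ 2) ^ ε - (t / q) ^ μ * (1 - q * t) ^ ε) := by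
  have hqμ := (rpow_pos_of_pos hq μ).ne'
  rw [faltIntegrand, rpow_neg hq.le, div_rpow ht.le hq.le]
  field_simp

lemma rpow_neg_mul_faltIntegrand_lt {a b : ℝ} (hq1 : q < 1) (ht : 0 < t) (htq : t < q)
    (hab : a < b) : q ^ (-a) * faltIntegrand ε q a t < q ^ (-b) * faltIntegrand ε q b t := by
  have hq := ht.trans htq
  have hqt : 0 < q - t := sub_pos.2 htq
  rw [rpow_neg_mul_faltIntegrand hq ht, rpow_neg_mul_faltIntegrand hq ht]
  have hB : 0 < (1 - q * t) ^ ε := rpow_pos_of_pos (by nlinarith) ε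
  have hpow : (t / q) ^ b < (t / q) ^ a :=
    rpow_lt_rpow_of_exponent_gt (div_pos ht hq) ((div_lt_one hq).2 htq) hab
  gcongr

end Integrands

section Falt

variable {ε q : ℝ}

lemma hasDerivAt_Falt (hε : 0 < ε) (hε1 : ε < 1) (hq : 0 < q) (hq1 : q < 1) {μ₀ : ℝ}
    (hμ₀ : 0 < μ₀) :
    HasDerivAt (fun μ => Falt μ ε q)
      (log q * Falt μ₀ ε q + ε * q * ∫ t in (0:ℝ)..q, faltLogIntegrand ε q μ₀ t) μ₀ := by
  set K := |log q| * ((1 + 2 * μ₀) / q + (1 + ε) / (1 - q)) + (1 + 2 * μ₀) / (μ₀ / 2 * q) with hK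
  have hbound : ∀ t ∈ Ioc 0 q, ∀ μ ∈ Metric.ball μ₀ (μ₀ / 2),
      ‖log q * faltIntegrand ε q μ t + faltLogIntegrand ε q μ t‖
        ≤ K * (t ^ (ε - 1) * (q - t) ^ (-ε)) := by
    rintro t ⟨ht, htq⟩ μ hμ
    obtain ⟨hμ_lo, hμ_hi⟩ := abs_sub_lt_iff.1 (Metric.mem_ball.1 hμ)
    have hμ : 0 < μ := by linarith
    have hg : 0 ≤ t ^ (ε - 1) * (q - t) ^ (-ε) :=
      mul_nonneg (rpow_nonneg ht.le _) (rpow_nonneg (sub_nonneg.2 htq) _)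
    have hφ := abs_faltIntegrand_le hε.le hq1 hμ.le ht htq
    have hψ := abs_faltLogIntegrand_le hε.le hq1 hμ ht htq
    calc ‖log q * faltIntegrand ε q μ t + faltLogIntegrand ε q μ t‖
        ≤ |log q| * |faltIntegrand ε q μ t| + |faltLogIntegrand ε q μ t| := by
          rw [Real.norm_eq_abs, ← abs_mul]; exact abs_add_le _ _
      _ ≤ |log q| * (((1 + μ) / q + (1 + ε) / (1 - q)) * (t ^ (ε - 1) * (q - t) ^ (-ε)))
          + (1 + μ) / (μ * q) * (t ^ (ε - 1) * (q - t) ^ (-ε)) := by gcongr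
      _ ≤ K * (t ^ (ε - 1) * (q - t) ^ (-ε)) := by
          rw [← mul_assoc, ← add_mul, hK]
          have : 0 < 1 - q := by linarith
          gcongr <;> linarith
  obtain ⟨-, hD⟩ := intervalIntegral.hasDerivAt_integral_of_dominated_loc_of_deriv_le
    (F := fun μ t => faltIntegrand ε q μ t)
    (F' := fun μ t => log q * faltIntegrand ε q μ t + faltLogIntegrand ε q μ t)
    (Metric.ball_mem_nhds μ₀ (half_pos hμ₀))
    (.of_forall fun _ => measurable_faltIntegrand.aestronglyMeasurable)
    (intervalIntegrable_faltIntegrand hε hε1 hq hq1 hμ₀.le)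
    ((measurable_faltIntegrand.const_mul _).add measurable_faltLogIntegrand).aestronglyMeasurable
    (.of_forall fun t ht => hbound t (by rwa [uIoc_of_le hq.le] at ht))
    ((intervalIntegrable_rpow_mul_sub_rpow (by linarith) (by linarith) (by linarith)
      (by linarith) hq).const_mul K)
    (.of_forall fun t ht μ _ => hasDerivAt_faltIntegrand hq (by
      rw [uIoc_of_le hq.le] at ht; exact ht.1))
  refine (hD.const_mul (ε * q)).congr_deriv ?_
  rw [intervalIntegral.integral_add
      ((intervalIntegrable_faltIntegrand hε hε1 hq hq1 hμ₀.le).const_mul _)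
      (intervalIntegrable_faltLogIntegrand hε hε1 hq hq1 hμ₀),
    intervalIntegral.integral_const_mul, Falt_eq_integral_faltIntegrand]
  ring

lemma strictMonoOn_rpow_neg_mul_Falt (hε : 0 < ε) (hε1 : ε < 1) (hq : 0 < q) (hq1 : q < 1) :
    StrictMonoOn (fun μ => q ^ (-μ) * Falt μ ε q) (Ici 0) := by
  intro a ha b hb hab
  have hint : ∀ μ ∈ Ici (0:ℝ),
      IntervalIntegrable (fun t => q ^ (-μ) * faltIntegrand ε q μ t) volume 0 q :=
    fun μ hμ => (intervalIntegrable_faltIntegrand hε hε1 hq hq1 hμ).const_mul _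
  have hpos := intervalIntegral.intervalIntegral_pos_of_pos_on ((hint b hb).sub (hint a ha))
    (fun t ht => sub_pos.2 (rpow_neg_mul_faltIntegrand_lt hq1 ht.1 ht.2 hab)) hq
  rw [intervalIntegral.integral_sub (hint b hb) (hint a ha), sub_pos,
    intervalIntegral.integral_const_mul, intervalIntegral.integral_const_mul] at hpos
  show q ^ (-a) * Falt a ε q < q ^ (-b) * Falt b ε q
  rw [Falt_eq_integral_faltIntegrand, Falt_eq_integral_faltIntegrand, mul_left_comm,
    mul_left_comm (q ^ (-b))]
  exact mul_lt_mul_of_pos_left hpos (mul_pos hε hq)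

end Falt

/-- For 0 < ε < q < 1: if F(μ₀, ε, q) = 0 for some μ₀ > 0, then
∂F/∂μ(μ₀, ε, q) = εq ∫₀^q (t^ε/(q-t)^ε)·(t^{μ₀}(1-qt)^ε/(t(q-t)))·log(q/t) dt > 0.
Consequently, μ ↦ F(μ, ε, q) has at most one zero in (0, ∞). -/
theorem stmt11 (ε q : ℝ) (hε : 0 < ε) (hεq : ε < q) (hq : q < 1) :
    (∀ μ₀ : ℝ, 0 < μ₀ → Falt μ₀ ε q = 0 →
      deriv (fun μ : ℝ => Falt μ ε q) μ₀
          = ε * q * ∫ t in (0:ℝ)..q,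
              (t ^ ε / (q - t) ^ ε) * (t ^ μ₀ * (1 - q * t) ^ ε / (t * (q - t)))
                * Real.log (q / t) ∧
      0 < ε * q * ∫ t in (0:ℝ)..q,
              (t ^ ε / (q - t) ^ ε) * (t ^ μ₀ * (1 - q * t) ^ ε / (t * (q - t)))
                * Real.log (q / t)) ∧
    ∀ μ₁ μ₂ : ℝ, 0 < μ₁ → 0 < μ₂ → Falt μ₁ ε q = 0 → Falt μ₂ ε q = 0 → μ₁ = μ₂ := by
  have hq0 : 0 < q := hε.trans hεq
  have hε1 : ε < 1 := hεq.trans hq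
  refine ⟨fun μ₀ hμ₀ hF => ?_, fun μ₁ μ₂ hμ₁ hμ₂ hF₁ hF₂ => ?_⟩
  · have hD := hasDerivAt_Falt hε hε1 hq0 hq hμ₀
    rw [hF, mul_zero, zero_add] at hD
    exact ⟨hD.deriv, mul_pos (mul_pos hε hq0) (intervalIntegral.intervalIntegral_pos_of_pos_on
      (intervalIntegrable_faltLogIntegrand hε hε1 hq0 hq hμ₀)
      (fun t ht => faltLogIntegrand_pos hq ht.1 ht.2) hq0)⟩
  · refine (strictMonoOn_rpow_neg_mul_Falt hε hε1 hq0 hq).injOn (mem_Ici.2 hμ₁.le)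
      (mem_Ici.2 hμ₂.le) ?_
    simp only [hF₁, hF₂, mul_zero]
end
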